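/- arXiv:2412.10222 — 13 statements merged into one kernel-verified Lean document; each statement's English description precedes it below -/
import Mathlib

section
/- If α < β, h : [α,β] → ℝ is Lipschitz with constant L0, h ≥ 0 on [α,β], h(α) = h(β) = 0, and ∫_α^β h(x) dx = A0, then β − α ≥ √(2A0/L0). -/
/-! Since `h` vanishes at `α` and is `L0`-Lipschitz, it lies below the line `L0 (x - α)`
on `[α, β]`, so `A0 ≤ L0 (β - α)² / 2`; solving for `β - α` gives the bound. -/

open MeasureTheory Set

section LipschitzVanishingAtLeft

variable {a b L : ℝ} {h : ℝ → ℝ}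

theorem lipschitzOnWith_toNNReal_of_abs_sub_le (hL : 0 ≤ L)
    (hLip : ∀ x ∈ Icc a b, ∀ y ∈ Icc a b, |h x - h y| ≤ L * |x - y|) :
    LipschitzOnWith (Real.toNNReal L) h (Icc a b) := by
  rw [lipschitzOnWith_iff_dist_le_mul]
  intro x hx y hy
  simpa only [Real.dist_eq, Real.coe_toNNReal L hL] using hLip x hx y hy

theorem le_mul_sub_of_abs_sub_le_of_eq_zero_left (hab : a ≤ b)
    (hLip : ∀ x ∈ Icc a b, ∀ y ∈ Icc a b, |h x - h y| ≤ L * |x - y|) (ha : h a = 0)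
    {x : ℝ} (hx : x ∈ Icc a b) : h x ≤ L * (x - a) := by
  have hxa := hLip x hx a ⟨le_rfl, hab⟩
  rw [ha, sub_zero, abs_of_nonneg (sub_nonneg.2 hx.1)] at hxa
  exact (le_abs_self _).trans hxa

theorem integral_mul_sub_left (a b L : ℝ) :
    ∫ x in a..b, L * (x - a) = L * (b - a) ^ 2 / 2 := by
  rw [intervalIntegral.integral_const_mul,
    intervalIntegral.integral_sub intervalIntegral.intervalIntegrable_id intervalIntegrable_const,
    integral_id, intervalIntegral.integral_const, smul_eq_mul]
  ring

theorem integral_le_of_abs_sub_le_of_eq_zero_left (hab : a ≤ b) (hL : 0 ≤ L)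
    (hLip : ∀ x ∈ Icc a b, ∀ y ∈ Icc a b, |h x - h y| ≤ L * |x - y|) (ha : h a = 0) :
    ∫ x in a..b, h x ≤ L * (b - a) ^ 2 / 2 := by
  have hint : IntervalIntegrable h volume a b :=
    ((lipschitzOnWith_toNNReal_of_abs_sub_le hL hLip).continuousOn.mono
      (uIcc_of_le hab).subset).intervalIntegrable
  have hlin : IntervalIntegrable (fun x => L * (x - a)) volume a b := by
    apply Continuous.intervalIntegrable
    fun_prop
  calc ∫ x in a..b, h x
      ≤ ∫ x in a..b, L * (x - a) := intervalIntegral.integral_mono_on hab hint hlin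
        fun x hx => le_mul_sub_of_abs_sub_le_of_eq_zero_left hab hLip ha hx
    _ = L * (b - a) ^ 2 / 2 := integral_mul_sub_left a b L

end LipschitzVanishingAtLeft

theorem sqrt_two_mul_div_le_of_le_mul_sq_div_two {A L d : ℝ} (hL : 0 < L) (hd : 0 ≤ d)
    (hA : A ≤ L * d ^ 2 / 2) : Real.sqrt (2 * A / L) ≤ d := by
  rw [Real.sqrt_le_left hd, div_le_iff₀ hL]
  linarith

theorem stmt_0_general (A0 L0 : ℝ) (hL0 : 1 ≤ L0)
    (α β : ℝ) (hαβ : α < β) (h : ℝ → ℝ)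
    (hLip : ∀ x1 ∈ Set.Icc α β, ∀ x2 ∈ Set.Icc α β, |h x1 - h x2| ≤ L0 * |x1 - x2|)
    (hhα : h α = 0)
    (harea : (∫ x in α..β, h x) = A0) :
    Real.sqrt (2 * A0 / L0) ≤ β - α := by
  have hL0pos : 0 < L0 := zero_lt_one.trans_le hL0
  have hA0 : A0 ≤ L0 * (β - α) ^ 2 / 2 :=
    harea ▸ integral_le_of_abs_sub_le_of_eq_zero_left hαβ.le hL0pos.le hLip hhα
  exact sqrt_two_mul_div_le_of_le_mul_sq_div_two hL0pos (sub_nonneg.2 hαβ.le) hA0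

/-- If `α < β`, `h : [α,β] → ℝ` is Lipschitz with constant `L0`, `h ≥ 0` on `[α,β]`,
`h α = h β = 0`, and `∫_α^β h = A0`, then `β - α ≥ √(2 A0 / L0)`. -/
theorem stmt_0 (A0 L0 : ℝ) (hA0 : 0 < A0) (hL0 : 1 ≤ L0)
    (α β : ℝ) (hαβ : α < β) (h : ℝ → ℝ)
    (hLip : ∀ x1 ∈ Set.Icc α β, ∀ x2 ∈ Set.Icc α β, |h x1 - h x2| ≤ L0 * |x1 - x2|)
    (hnonneg : ∀ x ∈ Set.Icc α β, 0 ≤ h x)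
    (hhα : h α = 0) (hhβ : h β = 0)
    (harea : (∫ x in α..β, h x) = A0) :
    Real.sqrt (2 * A0 / L0) ≤ β - α :=
  stmt_0_general A0 L0 hL0 α β hαβ h hLip hhα harea
end

section
/- Under the stated hypotheses, β − α ≥ 16η0²/M. -/
/-!
Since `h'` is the integral of `h''`, it drops by `h' α - h' β ≥ 4 η0` across `[α, β]`, while by
Cauchy–Schwarz that drop is at most `√((β - α) ∫ |h''|²) ≤ √((β - α) M)`.
-/

open MeasureTheory Set

namespace intervalIntegral

theorem sq_integral_le_mul_integral_sq {f : ℝ → ℝ} {a b : ℝ} (hab : a ≤ b)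
    (hf : IntervalIntegrable f volume a b)
    (hf2 : IntervalIntegrable (fun x => f x ^ 2) volume a b) :
    (∫ x in a..b, f x) ^ 2 ≤ (b - a) * ∫ x in a..b, f x ^ 2 := by
  have hquad : ∀ t : ℝ,
      0 ≤ (b - a) * (t * t) + (-2 * ∫ x in a..b, f x) * t + ∫ x in a..b, f x ^ 2 := by
    intro t
    have hexpand : (fun x => (f x - t) ^ 2) = fun x => f x ^ 2 - 2 * t * f x + t ^ 2 := by
      ext x; ring
    have hint : ∫ x in a..b, (f x - t) ^ 2
        = (b - a) * (t * t) + (-2 * ∫ x in a..b, f x) * t + ∫ x in a..b, f x ^ 2 := by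
      rw [hexpand, integral_add (hf2.sub (hf.const_mul _)) intervalIntegrable_const,
        integral_sub hf2 (hf.const_mul _), integral_const_mul, integral_const, smul_eq_mul]
      ring
    rw [← hint]
    exact integral_nonneg hab fun x _ => sq_nonneg _
  have hdiscrim := discrim_le_zero hquad
  rw [discrim] at hdiscrim
  linarith

end intervalIntegral

theorem stmt_2_general (η0 M α β : ℝ) (hη0 : 0 < η0) (hM : 0 < M) (hαβ : α < β)
    (h' h'' : ℝ → ℝ)
    (h'α : 2 * η0 ≤ h' α) (h'β : h' β ≤ -(2 * η0))
    (hAC : ∀ x ∈ Set.Icc α β, h' x = h' α + ∫ s in α..x, h'' s)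
    (hint : IntervalIntegrable h'' volume α β)
    (hintsq : IntervalIntegrable (fun x => |h'' x| ^ 2) volume α β)
    (hL2 : (∫ x in α..β, |h'' x| ^ 2) ≤ M) :
    16 * η0 ^ 2 / M ≤ β - α := by
  simp only [sq_abs] at hintsq hL2
  have hdrop : ∫ s in α..β, h'' s = h' β - h' α := by
    linarith [hAC β ⟨hαβ.le, le_rfl⟩]
  have hCS := intervalIntegral.sq_integral_le_mul_integral_sq hαβ.le hint hintsq
  rw [hdrop] at hCS
  rw [div_le_iff₀ hM]
  nlinarith [mul_le_mul_of_nonneg_left hL2 (sub_nonneg.mpr hαβ.le)]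

/-- Let `η0 > 0`, `M > 0`, `α < β`, and let `h` be `C¹` on `[α,β]` with
`h α = h β = 0`, `h' α ≥ 2η0`, `h' β ≤ -2η0`, where `h'` is absolutely continuous with
derivative `h''` satisfying `∫_α^β |h''|² ≤ M`.  Then `β - α ≥ 16 η0² / M`. -/
theorem stmt_2 (η0 M α β : ℝ) (hη0 : 0 < η0) (hM : 0 < M) (hαβ : α < β)
    (h h' h'' : ℝ → ℝ)
    (hderiv : ∀ x ∈ Set.Icc α β, HasDerivWithinAt h (h' x) (Set.Icc α β) x)
    (hcont : ContinuousOn h' (Set.Icc α β))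
    (hhα : h α = 0) (hhβ : h β = 0)
    (h'α : 2 * η0 ≤ h' α) (h'β : h' β ≤ -(2 * η0))
    (hAC : ∀ x ∈ Set.Icc α β, h' x = h' α + ∫ s in α..x, h'' s)
    (hint : IntervalIntegrable h'' volume α β)
    (hintsq : IntervalIntegrable (fun x => |h'' x| ^ 2) volume α β)
    (hL2 : (∫ x in α..β, |h'' x| ^ 2) ≤ M) :
    16 * η0 ^ 2 / M ≤ β - α :=
  stmt_2_general η0 M α β hη0 hM hαβ h' h'' h'α h'β hAC hint hintsq hL2
end

section
/- Under the stated hypotheses, for every x ∈ [α, min{β, α + η0²/M}] one has h'(x) ≥ η0 and h(x) ≥ η0(x − α). -/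
open MeasureTheory Set

/-! Since `h' x = h' α + ∫_α^x h''`, it suffices that `|∫_α^x h''| ≤ η0`. Young's inequality
`2|y| ≤ ε + y²/ε` with `ε = M/η0` bounds this integral by
`(M/η0 · (x - α) + η0/M · ∫ |h''|²) / 2`, which is at most `η0` once `x - α ≤ η0²/M`.
Then `h' ≥ η0` makes `h y - η0 (y - α)` monotone, and it vanishes at `α`. -/

lemma abs_le_half_add_inv_mul_sq {ε : ℝ} (hε : 0 < ε) (y : ℝ) :
    |y| ≤ (ε + ε⁻¹ * |y| ^ 2) / 2 := by
  have key : 2 * ε * |y| ≤ ε ^ 2 + |y| ^ 2 := by nlinarith [sq_nonneg (ε - |y|)]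
  calc |y| = ε⁻¹ * (2 * ε * |y|) / 2 := by field_simp
    _ ≤ ε⁻¹ * (ε ^ 2 + |y| ^ 2) / 2 := by gcongr
    _ = (ε + ε⁻¹ * |y| ^ 2) / 2 := by field_simp

lemma abs_intervalIntegral_le_young {f : ℝ → ℝ} {a b ε : ℝ} (hab : a ≤ b) (hε : 0 < ε)
    (hf : IntervalIntegrable f volume a b)
    (hf2 : IntervalIntegrable (fun x => |f x| ^ 2) volume a b) :
    |∫ x in a..b, f x| ≤ (ε * (b - a) + ε⁻¹ * ∫ x in a..b, |f x| ^ 2) / 2 := by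
  have hbound : IntervalIntegrable (fun x => (ε + ε⁻¹ * |f x| ^ 2) / 2) volume a b :=
    (intervalIntegrable_const.add (hf2.const_mul _)).div_const _
  calc |∫ x in a..b, f x| ≤ ∫ x in a..b, |f x| :=
        intervalIntegral.abs_integral_le_integral_abs hab
    _ ≤ ∫ x in a..b, (ε + ε⁻¹ * |f x| ^ 2) / 2 :=
        intervalIntegral.integral_mono_on hab hf.abs hbound fun x _ =>
          abs_le_half_add_inv_mul_sq hε (f x)
    _ = (ε * (b - a) + ε⁻¹ * ∫ x in a..b, |f x| ^ 2) / 2 := by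
        rw [intervalIntegral.integral_div,
          intervalIntegral.integral_add intervalIntegrable_const (hf2.const_mul _),
          intervalIntegral.integral_const_mul, intervalIntegral.integral_const, smul_eq_mul,
          mul_comm (b - a)]

lemma abs_intervalIntegral_le_of_integral_sq_le {f : ℝ → ℝ} {a b η M : ℝ} (hab : a ≤ b)
    (hη : 0 < η) (hM : 0 < M) (hf : IntervalIntegrable f volume a b)
    (hf2 : IntervalIntegrable (fun x => |f x| ^ 2) volume a b)
    (hL2 : ∫ x in a..b, |f x| ^ 2 ≤ M) (hlen : b - a ≤ η ^ 2 / M) :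
    |∫ x in a..b, f x| ≤ η := by
  have hε : 0 < M / η := div_pos hM hη
  calc |∫ x in a..b, f x| ≤ (M / η * (b - a) + (M / η)⁻¹ * ∫ x in a..b, |f x| ^ 2) / 2 :=
        abs_intervalIntegral_le_young hab hε hf hf2
    _ ≤ (M / η * (η ^ 2 / M) + (M / η)⁻¹ * M) / 2 := by gcongr
    _ = η := by field_simp; ring

theorem stmt_3_general (η0 M α β : ℝ) (hη0 : 0 < η0) (hM : 0 < M)
    (h h' h'' : ℝ → ℝ)
    (hderiv : ∀ x ∈ Set.Icc α β, HasDerivWithinAt h (h' x) (Set.Icc α β) x)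
    (hhα : h α = 0)
    (h'α : 2 * η0 ≤ h' α)
    (hAC : ∀ x ∈ Set.Icc α β, h' x = h' α + ∫ s in α..x, h'' s)
    (hint : IntervalIntegrable h'' volume α β)
    (hintsq : IntervalIntegrable (fun x => |h'' x| ^ 2) volume α β)
    (hL2 : (∫ x in α..β, |h'' x| ^ 2) ≤ M) :
    ∀ x ∈ Set.Icc α (min β (α + η0 ^ 2 / M)),
      η0 ≤ h' x ∧ η0 * (x - α) ≤ h x := by
  set m := min β (α + η0 ^ 2 / M)
  have hIcc : Icc α m ⊆ Icc α β := Icc_subset_Icc le_rfl (min_le_left _ _)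
  have deriv_lower : ∀ y ∈ Icc α m, η0 ≤ h' y := by
    intro y hy
    have hyβ : y ≤ β := (hIcc hy).2
    have hsub : uIcc α y ⊆ uIcc α β := uIcc_subset_uIcc_left (mem_uIcc_of_le hy.1 hyβ)
    have hL2y : ∫ s in α..y, |h'' s| ^ 2 ≤ M :=
      (intervalIntegral.integral_mono_interval le_rfl hy.1 hyβ
        (ae_of_all _ fun _ => by positivity) hintsq).trans hL2
    have hsmall : |∫ s in α..y, h'' s| ≤ η0 :=
      abs_intervalIntegral_le_of_integral_sq_le hy.1 hη0 hM (hint.mono_set hsub)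
        (hintsq.mono_set hsub) hL2y (by linarith [hy.2.trans (min_le_right _ _)])
    rw [hAC y (hIcc hy)]
    linarith [neg_abs_le (∫ s in α..y, h'' s)]
  have hmono : MonotoneOn (fun y => h y - η0 * (y - α)) (Icc α m) := by
    refine monotoneOn_of_hasDerivWithinAt_nonneg (f' := fun y => h' y - η0) (convex_Icc α m)
      ?_ (fun y hy => ?_) (fun y hy => sub_nonneg.2 (deriv_lower y (interior_subset hy)))
    · have hcont : ContinuousOn h (Icc α m) := fun y hy =>
        (hderiv y (hIcc hy)).continuousWithinAt.mono hIcc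
      exact hcont.sub (by fun_prop)
    · have hy' : y ∈ Icc α β := hIcc (interior_subset hy)
      have hlin : HasDerivAt (fun y => η0 * (y - α)) η0 y := by
        simpa using ((hasDerivAt_id y).sub_const α).const_mul η0
      exact ((hderiv y hy').mono (interior_subset.trans hIcc)).sub hlin.hasDerivWithinAt
  intro x hx
  refine ⟨deriv_lower x hx, ?_⟩
  simpa [hhα] using hmono (left_mem_Icc.2 (hx.1.trans hx.2)) hx hx.1

/-- Let `η0 > 0`, `M > 0`, `α < β`, and let `h` be `C¹` on `[α,β]` with `h α = 0` and
`h' α ≥ 2η0`, where `h'` is absolutely continuous with derivative `h''` satisfying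
`∫_α^β |h''|² ≤ M`.  Then for every `x ∈ [α, min{β, α + η0²/M}]` one has
`h' x ≥ η0` and `h x ≥ η0 (x - α)`. -/
theorem stmt_3 (η0 M α β : ℝ) (hη0 : 0 < η0) (hM : 0 < M) (hαβ : α < β)
    (h h' h'' : ℝ → ℝ)
    (hderiv : ∀ x ∈ Set.Icc α β, HasDerivWithinAt h (h' x) (Set.Icc α β) x)
    (hcont : ContinuousOn h' (Set.Icc α β))
    (hhα : h α = 0)
    (h'α : 2 * η0 ≤ h' α)
    (hAC : ∀ x ∈ Set.Icc α β, h' x = h' α + ∫ s in α..x, h'' s)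
    (hint : IntervalIntegrable h'' volume α β)
    (hintsq : IntervalIntegrable (fun x => |h'' x| ^ 2) volume α β)
    (hL2 : (∫ x in α..β, |h'' x| ^ 2) ≤ M) :
    ∀ x ∈ Set.Icc α (min β (α + η0 ^ 2 / M)),
      η0 ≤ h' x ∧ η0 * (x - α) ≤ h x :=
  stmt_3_general η0 M α β hη0 hM h h' h'' hderiv hhα h'α hAC hint hintsq hL2
end

section
/- Under the stated hypotheses, ‖σ − 1‖_{L∞(I_r)} ≤ 1/2. -/
/-!
Integrating the pointwise bound `|h''| ≤ c + h''² / (4c)` with `c = M / η0` gives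
`|h'(t) - h'(0)| ≤ (M / η0) t + η0 / 4` on `[0, β]`. As `h'` drops by at least `4 η0` across
`[0, β]`, this forces `r < β`, and on `[0, r]` it gives `|h' - h'(0)| ≤ η0 / 2`. The mean value
inequality then yields `|h(x) - h'(0) x| ≤ η0 x / 2`, so `h(x) ≥ 3 η0 x / 2` and
`|σ(x) - 1| ≤ 1 / 3`.
-/

open MeasureTheory Set

/-- The flattening factor `σ(x) := h'(0)·x / h(x)` (with `σ(0) := 1`), where `m = h'(0)`. -/
noncomputable def sigmaFun (h : ℝ → ℝ) (m : ℝ) (x : ℝ) : ℝ :=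
  if x = 0 then 1 else m * x / h x

section

variable {f f' : ℝ → ℝ} {a b c t M : ℝ}

lemma abs_le_add_sq_div (x : ℝ) (hc : 0 < c) : |x| ≤ c + x ^ 2 / (4 * c) := by
  rw [← sub_nonneg]
  have key : c + x ^ 2 / (4 * c) - |x| = (|x| - 2 * c) ^ 2 / (4 * c) := by
    field_simp
    rw [← sq_abs x]
    ring
  rw [key]
  positivity

lemma integral_eq_sub_of_hasDerivWithinAt_Icc
    (hf : ∀ x ∈ Icc a b, HasDerivWithinAt f (f' x) (Icc a b) x)
    (hf' : ContinuousOn f' (Icc a b)) (ht : t ∈ Icc a b) :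
    ∫ x in a..t, f' x = f t - f a := by
  have hsub : Icc a t ⊆ Icc a b := Icc_subset_Icc_right ht.2
  refine intervalIntegral.integral_eq_sub_of_hasDerivAt_of_le ht.1
    (fun x hx => (hf x (hsub hx)).continuousWithinAt.mono hsub) (fun x hx => ?_)
    ((hf'.mono hsub).intervalIntegrable_of_Icc ht.1)
  exact (hf x (hsub (Ioo_subset_Icc_self hx))).hasDerivAt
    (Icc_mem_nhds hx.1 (hx.2.trans_le ht.2))

lemma abs_sub_le_of_integral_deriv_sq_le
    (hf : ∀ x ∈ Icc a b, HasDerivWithinAt f (f' x) (Icc a b) x)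
    (hf' : ContinuousOn f' (Icc a b)) (hM : ∫ x in a..b, f' x ^ 2 ≤ M) (hc : 0 < c)
    (ht : t ∈ Icc a b) :
    |f t - f a| ≤ c * (t - a) + M / (4 * c) := by
  have hint : IntervalIntegrable f' volume a t :=
    (hf'.mono (Icc_subset_Icc_right ht.2)).intervalIntegrable_of_Icc ht.1
  have hint_sq : ∀ s ∈ Icc a b, IntervalIntegrable (fun x => f' x ^ 2) volume a s := fun s hs =>
    ((hf'.pow 2).mono (Icc_subset_Icc_right hs.2)).intervalIntegrable_of_Icc hs.1
  have hsq_le : ∫ x in a..t, f' x ^ 2 ≤ M :=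
    (intervalIntegral.integral_mono_interval le_rfl ht.1 ht.2
      (Filter.Eventually.of_forall fun x => sq_nonneg (f' x))
      (hint_sq b ⟨ht.1.trans ht.2, le_rfl⟩)).trans hM
  rw [← integral_eq_sub_of_hasDerivWithinAt_Icc hf hf' ht]
  calc |∫ x in a..t, f' x|
      ≤ ∫ x in a..t, |f' x| := intervalIntegral.abs_integral_le_integral_abs ht.1
    _ ≤ ∫ x in a..t, (c + f' x ^ 2 / (4 * c)) :=
        intervalIntegral.integral_mono_on ht.1 hint.abs
          (intervalIntegrable_const.add ((hint_sq t ht).div_const _))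
          fun x _ => abs_le_add_sq_div (f' x) hc
    _ = c * (t - a) + (∫ x in a..t, f' x ^ 2) / (4 * c) := by
        rw [intervalIntegral.integral_add intervalIntegrable_const ((hint_sq t ht).div_const _),
          intervalIntegral.integral_const, intervalIntegral.integral_div, smul_eq_mul, mul_comm]
    _ ≤ c * (t - a) + M / (4 * c) := by gcongr

end

lemma abs_sigmaFun_sub_one_le {h : ℝ → ℝ} {m ε x : ℝ} (hx : 0 < x) (hε : 0 < ε)
    (hm : 3 * ε ≤ m) (hdev : |h x - m * x| ≤ ε * x) :
    |sigmaFun h m x - 1| ≤ 1 / 2 := by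
  have hlow : 2 * ε * x ≤ h x := by nlinarith [neg_abs_le (h x - m * x)]
  have hpos : 0 < h x := by nlinarith
  rw [sigmaFun, if_neg hx.ne', div_sub_one hpos.ne', abs_div, abs_of_pos hpos, abs_sub_comm,
    div_le_iff₀ hpos]
  linarith

theorem stmt_5_general (η0 M : ℝ) (hη0 : 0 < η0) (hM : 1 < M)
    (β : ℝ) (h h' h'' h''' : ℝ → ℝ) (r : ℝ)
    (hβpos : 0 < β)
    (hd1 : ∀ x ∈ Set.Icc (0:ℝ) β, HasDerivWithinAt h (h' x) (Set.Icc 0 β) x)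
    (hd2 : ∀ x ∈ Set.Icc (0:ℝ) β, HasDerivWithinAt h' (h'' x) (Set.Icc 0 β) x)
    (hd3 : ∀ x ∈ Set.Icc (0:ℝ) β, HasDerivWithinAt h'' (h''' x) (Set.Icc 0 β) x)
    (h0 : h 0 = 0)
    (h'0 : 2 * η0 ≤ h' 0) (h'β : h' β ≤ -(2 * η0))
    (hL2 : (∫ x in (0:ℝ)..β, |h'' x| ^ 2) ≤ M)
    (hr' : r ≤ η0 ^ 2 / (4 * M)) :
    ∀ x ∈ Set.Ioo (0:ℝ) r, |sigmaFun h (h' 0) x - 1| ≤ 1 / 2 := by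
  have hc : 0 < M / η0 := by positivity
  have hsmall : ∀ t ≤ r, M / η0 * t ≤ η0 / 4 := fun t ht => by
    calc M / η0 * t ≤ M / η0 * (η0 ^ 2 / (4 * M)) := by gcongr; exact ht.trans hr'
      _ = η0 / 4 := by field_simp
  have hdev : ∀ t ∈ Icc 0 β, |h' t - h' 0| ≤ M / η0 * t + η0 / 4 := fun t ht => by
    have := abs_sub_le_of_integral_deriv_sq_le hd2 (fun x hx => (hd3 x hx).continuousWithinAt)
      (by simpa only [sq_abs] using hL2) hc ht
    rwa [sub_zero, show M / (4 * (M / η0)) = η0 / 4 by field_simp] at this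
  have hrβ : r < β := by
    by_contra! hβr
    have := hdev β ⟨hβpos.le, le_rfl⟩
    rw [abs_sub_comm, abs_of_nonneg (by linarith)] at this
    linarith [hsmall β hβr]
  rintro x ⟨hx0, hxr⟩
  have hIcc : Icc 0 x ⊆ Icc 0 β := Icc_subset_Icc_right (hxr.trans hrβ).le
  have hslope : ∀ t ∈ Ico 0 x, ‖h' t - h' 0‖ ≤ η0 / 2 := fun t ht => by
    rw [Real.norm_eq_abs]
    linarith [hdev t (hIcc (Ico_subset_Icc_self ht)), hsmall t (ht.2.trans hxr).le]
  have hlin := norm_image_sub_le_of_norm_deriv_le_segment' (f := fun t => h t - h' 0 * t)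
    (fun t ht => (((hd1 t (hIcc ht)).mono hIcc).sub
      ((hasDerivWithinAt_id t _).const_mul (h' 0))).congr_deriv (by ring)) hslope
    x (right_mem_Icc.2 hx0.le)
  simp only [h0, mul_zero, sub_zero, Real.norm_eq_abs] at hlin
  exact abs_sigmaFun_sub_one_le hx0 (by positivity) (by linarith) hlin

/-- Under the hypotheses on `h` (three times continuously differentiable on `[0,β]`,
positive inside, vanishing at the endpoints, `h'(0) ≥ 2η0`, `h'(β) ≤ -2η0`, Lipschitz with
constant `L0`, and `∫_0^β |h''|² ≤ M`) and for `0 < r ≤ η0²/(4M)`, one has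
`‖σ - 1‖_{L^∞((0,r))} ≤ 1/2`. -/
theorem stmt_5 (L0 η0 M : ℝ) (hL0 : 1 ≤ L0) (hη0 : 0 < η0) (hη0' : η0 < 1) (hM : 1 < M)
    (β : ℝ) (h h' h'' h''' : ℝ → ℝ) (r : ℝ)
    (hβpos : 0 < β)
    (hd1 : ∀ x ∈ Set.Icc (0:ℝ) β, HasDerivWithinAt h (h' x) (Set.Icc 0 β) x)
    (hd2 : ∀ x ∈ Set.Icc (0:ℝ) β, HasDerivWithinAt h' (h'' x) (Set.Icc 0 β) x)
    (hd3 : ∀ x ∈ Set.Icc (0:ℝ) β, HasDerivWithinAt h'' (h''' x) (Set.Icc 0 β) x)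
    (hc3 : ContinuousOn h''' (Set.Icc 0 β))
    (hpos : ∀ x ∈ Set.Ioo (0:ℝ) β, 0 < h x)
    (h0 : h 0 = 0) (hβ0 : h β = 0)
    (h'0 : 2 * η0 ≤ h' 0) (h'β : h' β ≤ -(2 * η0))
    (hLip : ∀ x1 ∈ Set.Icc (0:ℝ) β, ∀ x2 ∈ Set.Icc (0:ℝ) β, |h x1 - h x2| ≤ L0 * |x1 - x2|)
    (hL2 : (∫ x in (0:ℝ)..β, |h'' x| ^ 2) ≤ M)
    (hr : 0 < r) (hr' : r ≤ η0 ^ 2 / (4 * M)) :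
    ∀ x ∈ Set.Ioo (0:ℝ) r, |sigmaFun h (h' 0) x - 1| ≤ 1 / 2 :=
  stmt_5_general η0 M hη0 hM β h h' h'' h''' r hβpos hd1 hd2 hd3 h0 h'0 h'β hL2 hr'
end

section
/- Under the stated hypotheses there exists a constant C > 0, depending only on η0, M, and L0, such that for every i = 1,…,6: ‖ω_i‖_{L∞(I_r)} ≤ C r ‖h''‖_{L∞(I_r)} + C r² (‖h'''‖_{L∞(I_r)} + ‖h⁗‖_{L¹(I_r)}), and ‖ω_i'‖_{L∞(I_r)} ≤ C ‖h''‖_{L∞(I_r)} + C r (‖h''‖_{L∞(I_r)}² + ‖h'''‖_{L∞(I_r)} + ‖h⁗‖_{L¹(I_r)}) + C r³ (‖h'''‖_{L∞(I_r)}² + ‖h⁗‖_{L¹(I_r)}²). -/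
open MeasureTheory Set

/-- `ω₁(x) := h'(x)/√(1+h'(x)²) - m/√(1+m²)`. -/
noncomputable def omega1 (h h' : ℝ → ℝ) (m x : ℝ) : ℝ :=
  h' x / Real.sqrt (1 + (h' x) ^ 2) - m / Real.sqrt (1 + m ^ 2)

/-- `ω₂(x) := 1/√(1+m²) - 1/√(1+h'(x)²)`. -/
noncomputable def omega2 (h h' : ℝ → ℝ) (m x : ℝ) : ℝ :=
  1 / Real.sqrt (1 + m ^ 2) - 1 / Real.sqrt (1 + (h' x) ^ 2)

/-- `ω₃(x) := σ'(x) h(x) h'(x)/√(1+h'(x)²)`. -/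
noncomputable def omega3 (h h' : ℝ → ℝ) (m x : ℝ) : ℝ :=
  deriv (sigmaFun h m) x * h x * (h' x / Real.sqrt (1 + (h' x) ^ 2))

/-- `ω₄(x) := (σ(x)-1) h'(x)/√(1+h'(x)²)`. -/
noncomputable def omega4 (h h' : ℝ → ℝ) (m x : ℝ) : ℝ :=
  (sigmaFun h m x - 1) * (h' x / Real.sqrt (1 + (h' x) ^ 2))

/-- `ω₅(x) := σ'(x) h(x)/√(1+h'(x)²)`. -/
noncomputable def omega5 (h h' : ℝ → ℝ) (m x : ℝ) : ℝ :=
  deriv (sigmaFun h m) x * h x * (1 / Real.sqrt (1 + (h' x) ^ 2))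

/-- `ω₆(x) := (σ(x)-1)/√(1+h'(x)²)`. -/
noncomputable def omega6 (h h' : ℝ → ℝ) (m x : ℝ) : ℝ :=
  (sigmaFun h m x - 1) * (1 / Real.sqrt (1 + (h' x) ^ 2))

/-!
Near the left endpoint the profile is almost linear. By AM–GM, the bound `∫ |h''|² ≤ M` gives
`∫₀ᵗ |h''| ≤ η0 / 4 + M t / η0`; since `h'` drops by at least `4 η0` on `[0, β]` this forces
`r < β`, and for `t ≤ r` it gives `|h' t - h' 0| ≤ η0 / 2`, hence `h x ≥ η0 x` on `(0, r)`.
With `A = sup |h''|` on `(0, r)` and `m = h' 0`, the mean value inequality gives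
`|h' x - m| ≤ A x` and `|h x - m x| ≤ A x²`. Thus `σ - 1 = (m x - h) / h` and
`σ' h = m (h - x h') / h` have numerators of size `A x²` over denominators at least `η0 x`:
they are `O(A x)` with derivatives `O(A)`. The factors `h' / √(1 + h'²)` and `1 / √(1 + h'²)`
are bounded by `1` with derivatives bounded by `|h''| ≤ A`, so each `ω_i` is `O(A x)` with
derivative `O(A + A² x)`.
-/

open Filter Topology

lemma one_le_sqrt_one_add_sq (t : ℝ) : 1 ≤ √(1 + t ^ 2) :=
  Real.one_le_sqrt.2 (by nlinarith [sq_nonneg t])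

lemma abs_le_sqrt_one_add_sq (t : ℝ) : |t| ≤ √(1 + t ^ 2) :=
  Real.abs_le_sqrt (by linarith)

lemma hasDerivAt_sqrt_one_add_sq (t : ℝ) :
    HasDerivAt (fun s => √(1 + s ^ 2)) (t / √(1 + t ^ 2)) t := by
  convert ((hasDerivAt_pow 2 t).const_add 1).sqrt (by positivity) using 1
  field_simp
  ring

lemma hasDerivAt_div_sqrt_one_add_sq (t : ℝ) :
    HasDerivAt (fun s => s / √(1 + s ^ 2)) (1 / √(1 + t ^ 2) ^ 3) t := by
  have hS : 0 < √(1 + t ^ 2) := by positivity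
  refine ((hasDerivAt_id t).div (hasDerivAt_sqrt_one_add_sq t) hS.ne').congr_deriv ?_
  field_simp
  rw [Real.sq_sqrt (by positivity), id]
  ring

lemma hasDerivAt_one_div_sqrt_one_add_sq (t : ℝ) :
    HasDerivAt (fun s => 1 / √(1 + s ^ 2)) (-(t / √(1 + t ^ 2) ^ 3)) t := by
  have hS : 0 < √(1 + t ^ 2) := by positivity
  refine ((hasDerivAt_const t (1 : ℝ)).div (hasDerivAt_sqrt_one_add_sq t) hS.ne').congr_deriv ?_
  field_simp
  ring

lemma abs_div_sqrt_one_add_sq_le_one (t : ℝ) : |t / √(1 + t ^ 2)| ≤ 1 := by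
  have hS : 0 < √(1 + t ^ 2) := by positivity
  rw [abs_div, abs_of_pos hS, div_le_one hS]
  exact abs_le_sqrt_one_add_sq t

lemma abs_one_div_sqrt_one_add_sq_le_one (t : ℝ) : |1 / √(1 + t ^ 2)| ≤ 1 := by
  have hS : 0 < √(1 + t ^ 2) := by positivity
  rw [abs_div, abs_one, abs_of_pos hS, div_le_one hS]
  exact one_le_sqrt_one_add_sq t

lemma abs_one_div_sqrt_one_add_sq_pow_three_le_one (t : ℝ) : |1 / √(1 + t ^ 2) ^ 3| ≤ 1 := by
  have hS : 0 < √(1 + t ^ 2) ^ 3 := by positivity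
  rw [abs_div, abs_one, abs_of_pos hS, div_le_one hS]
  exact one_le_pow₀ (one_le_sqrt_one_add_sq t)

lemma abs_div_sqrt_one_add_sq_pow_three_le_one (t : ℝ) : |t / √(1 + t ^ 2) ^ 3| ≤ 1 := by
  have hS : 0 < √(1 + t ^ 2) ^ 3 := by positivity
  rw [abs_div, abs_of_pos hS, div_le_one hS]
  calc |t| ≤ √(1 + t ^ 2) := abs_le_sqrt_one_add_sq t
    _ ≤ √(1 + t ^ 2) ^ 3 := le_self_pow₀ (one_le_sqrt_one_add_sq t) (by norm_num)

lemma abs_sub_le_of_hasDerivAt_of_abs_le_one {f f' : ℝ → ℝ} (hf : ∀ t, HasDerivAt f (f' t) t)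
    (hf' : ∀ t, |f' t| ≤ 1) (a b : ℝ) : |f a - f b| ≤ |a - b| := by
  simpa using Convex.norm_image_sub_le_of_norm_hasDerivWithin_le
    (fun t _ => (hf t).hasDerivWithinAt) (fun t _ => hf' t) convex_univ (mem_univ b) (mem_univ a)

lemma ContinuousOn.le_of_forall_mem_Ioo_le {f : ℝ → ℝ} {a b c : ℝ} (hab : a < b)
    (hf : ContinuousOn f (Icc a b)) (hc : ∀ x ∈ Ioo a b, f x ≤ c) : ∀ x ∈ Icc a b, f x ≤ c :=
  fun x hx => ContinuousWithinAt.closure_le (by rwa [closure_Ioo hab.ne])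
    ((hf x hx).mono Ioo_subset_Icc_self) continuousWithinAt_const hc

lemma ContinuousOn.le_sSup_image_Ioo {f : ℝ → ℝ} {a b : ℝ} (hab : a < b)
    (hf : ContinuousOn f (Icc a b)) : ∀ x ∈ Icc a b, f x ≤ sSup (f '' Ioo a b) := by
  have hbdd : BddAbove (f '' Ioo a b) :=
    (isCompact_Icc.image_of_continuousOn hf).bddAbove.mono (image_mono Ioo_subset_Icc_self)
  exact hf.le_of_forall_mem_Ioo_le hab fun x hx => le_csSup hbdd (mem_image_of_mem f hx)

lemma sSup_image_abs_nonneg (f : ℝ → ℝ) (s : Set ℝ) : 0 ≤ sSup ((fun x => |f x|) '' s) :=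
  Real.sSup_nonneg (by rintro _ ⟨x, -, rfl⟩; exact abs_nonneg _)

lemma abs_le_of_hasDerivWithinAt_of_lipschitz {f f' : ℝ → ℝ} {a b L : ℝ} (hab : a < b)
    (hf : ∀ x ∈ Icc a b, HasDerivWithinAt f (f' x) (Icc a b) x) (hf' : ContinuousOn f' (Icc a b))
    (hlip : ∀ x ∈ Icc a b, ∀ y ∈ Icc a b, |f x - f y| ≤ L * |x - y|) :
    ∀ x ∈ Icc a b, |f' x| ≤ L := by
  have hL : 0 ≤ L := by
    have := hlip b (right_mem_Icc.2 hab.le) a (left_mem_Icc.2 hab.le)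
    rw [abs_of_pos (sub_pos.2 hab)] at this
    exact nonneg_of_mul_nonneg_left ((abs_nonneg _).trans this) (sub_pos.2 hab)
  refine hf'.abs.le_of_forall_mem_Ioo_le hab fun x hx => ?_
  have hnhds : Icc a b ∈ 𝓝 x := Icc_mem_nhds hx.1 hx.2
  exact ((hf x (Ioo_subset_Icc_self hx)).hasDerivAt hnhds).le_of_lip' hL
    (Filter.mem_of_superset hnhds fun y hy => hlip y hy x (Ioo_subset_Icc_self hx))

lemma abs_sub_sub_mul_le {f f' : ℝ → ℝ} {a b m C : ℝ} (hab : a ≤ b)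
    (hf : ∀ x ∈ Icc a b, HasDerivWithinAt f (f' x) (Icc a b) x)
    (hC : ∀ x ∈ Icc a b, |f' x - m| ≤ C) : |f b - f a - m * (b - a)| ≤ C * (b - a) := by
  have hg : ∀ x ∈ Icc a b, HasDerivWithinAt (fun y => f y - m * y) (f' x - m) (Icc a b) x :=
    fun x hx => (hf x hx).sub (by simpa using (hasDerivWithinAt_id x (Icc a b)).const_mul m)
  have := Convex.norm_image_sub_le_of_norm_hasDerivWithin_le hg hC (convex_Icc a b)
    (left_mem_Icc.2 hab) (right_mem_Icc.2 hab)
  simp only [Real.norm_eq_abs, abs_of_nonneg (sub_nonneg.2 hab)] at this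
  convert this using 2
  ring

lemma abs_sub_le_integral_abs {f f' : ℝ → ℝ} {a b : ℝ} (hab : a ≤ b)
    (hf : ∀ x ∈ Icc a b, HasDerivWithinAt f (f' x) (Icc a b) x) (hf' : ContinuousOn f' (Icc a b)) :
    |f b - f a| ≤ ∫ x in a..b, |f' x| := by
  rw [← intervalIntegral.integral_eq_sub_of_hasDeriv_right_of_le hab
    (fun x hx => (hf x hx).continuousWithinAt)
    (fun x hx => ((hf x (Ioo_subset_Icc_self hx)).hasDerivAt
      (Icc_mem_nhds hx.1 hx.2)).hasDerivWithinAt)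
    (hf'.intervalIntegrable_of_Icc hab)]
  exact intervalIntegral.abs_integral_le_integral_abs hab

lemma integral_abs_le_integral_sq_div_add {f : ℝ → ℝ} {a b c : ℝ} (hab : a ≤ b) (hc : 0 < c)
    (hf : ContinuousOn f (Icc a b)) :
    ∫ x in a..b, |f x| ≤ (∫ x in a..b, |f x| ^ 2) / (2 * c) + c * (b - a) / 2 := by
  have hi : IntervalIntegrable (fun x => |f x| ^ 2) volume a b :=
    (hf.abs.pow 2).intervalIntegrable_of_Icc hab
  calc ∫ x in a..b, |f x| ≤ ∫ x in a..b, (|f x| ^ 2 / (2 * c) + c / 2) := by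
        refine intervalIntegral.integral_mono_on hab (hf.abs.intervalIntegrable_of_Icc hab)
          ((hi.div_const _).add intervalIntegrable_const) fun x _ => ?_
        rw [div_add_div _ _ (by positivity) two_ne_zero, le_div_iff₀ (by positivity)]
        nlinarith [sq_nonneg (|f x| - c)]
    _ = (∫ x in a..b, |f x| ^ 2) / (2 * c) + c * (b - a) / 2 := by
        rw [intervalIntegral.integral_add (hi.div_const _) intervalIntegrable_const,
          intervalIntegral.integral_div, intervalIntegral.integral_const, smul_eq_mul]
        ring

section Profile

variable {h h' h'' : ℝ → ℝ} {β η M : ℝ}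

lemma integral_abs_le_of_integral_sq_le (hη : 0 < η) (hM : 0 < M)
    (hh'' : ContinuousOn h'' (Icc 0 β)) (hL2 : ∫ x in (0 : ℝ)..β, |h'' x| ^ 2 ≤ M)
    {t : ℝ} (ht : t ∈ Icc 0 β) : ∫ x in (0 : ℝ)..t, |h'' x| ≤ η / 4 + M * t / η := by
  have hsq : ∫ x in (0 : ℝ)..t, |h'' x| ^ 2 ≤ M :=
    (intervalIntegral.integral_mono_interval le_rfl ht.1 ht.2
      (Eventually.of_forall fun x => sq_nonneg |h'' x|)
      ((hh''.abs.pow 2).intervalIntegrable_of_Icc (ht.1.trans ht.2))).trans hL2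
  calc ∫ x in (0 : ℝ)..t, |h'' x|
      ≤ (∫ x in (0 : ℝ)..t, |h'' x| ^ 2) / (2 * (2 * M / η)) + 2 * M / η * (t - 0) / 2 :=
        integral_abs_le_integral_sq_div_add ht.1 (by positivity)
          (hh''.mono (Icc_subset_Icc le_rfl ht.2))
    _ ≤ M / (2 * (2 * M / η)) + 2 * M / η * (t - 0) / 2 := by gcongr
    _ = η / 4 + M * t / η := by field_simp; ring

lemma sq_div_lt_of_integral_sq_le (hη : 0 < η) (hM : 0 < M) (hβ : 0 ≤ β)
    (hh' : ∀ x ∈ Icc 0 β, HasDerivWithinAt h' (h'' x) (Icc 0 β) x)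
    (hh'' : ContinuousOn h'' (Icc 0 β)) (hm0 : 2 * η ≤ h' 0) (hmβ : h' β ≤ -(2 * η))
    (hL2 : ∫ x in (0 : ℝ)..β, |h'' x| ^ 2 ≤ M) : η ^ 2 / (4 * M) < β := by
  have hdrop : 4 * η ≤ η / 4 + M * β / η :=
    calc 4 * η ≤ |h' β - h' 0| := by rw [abs_sub_comm]; exact le_abs.2 (Or.inl (by linarith))
      _ ≤ ∫ x in (0 : ℝ)..β, |h'' x| := abs_sub_le_integral_abs hβ hh' hh''
      _ ≤ η / 4 + M * β / η :=
        integral_abs_le_of_integral_sq_le hη hM hh'' hL2 (right_mem_Icc.2 hβ)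
  rw [div_lt_iff₀ (by positivity)]
  have : 15 * η ^ 2 ≤ 4 * (M * β) := by
    have := (le_div_iff₀ hη).1 (show 15 * η / 4 ≤ M * β / η by linarith)
    nlinarith
  nlinarith [pow_pos hη 2]

lemma abs_deriv_sub_le_half (hη : 0 < η) (hM : 0 < M)
    (hh' : ∀ x ∈ Icc 0 β, HasDerivWithinAt h' (h'' x) (Icc 0 β) x)
    (hh'' : ContinuousOn h'' (Icc 0 β)) (hL2 : ∫ x in (0 : ℝ)..β, |h'' x| ^ 2 ≤ M)
    {t : ℝ} (ht : t ∈ Icc 0 β) (htM : t ≤ η ^ 2 / (4 * M)) : |h' t - h' 0| ≤ η / 2 := by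
  have hsub : Icc 0 t ⊆ Icc 0 β := Icc_subset_Icc le_rfl ht.2
  have hMt : M * t / η ≤ η / 4 := by
    rw [div_le_iff₀ hη]
    rw [le_div_iff₀ (by positivity)] at htM
    linarith
  calc |h' t - h' 0| ≤ ∫ x in (0 : ℝ)..t, |h'' x| :=
        abs_sub_le_integral_abs ht.1 (fun x hx => (hh' x (hsub hx)).mono hsub) (hh''.mono hsub)
    _ ≤ η / 4 + M * t / η := integral_abs_le_of_integral_sq_le hη hM hh'' hL2 ht
    _ ≤ η / 2 := by linarith

end Profile

lemma hasDerivAt_sigmaFun {h h' : ℝ → ℝ} {m x : ℝ} (hx : x ≠ 0) (hh : HasDerivAt h (h' x) x)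
    (hpos : h x ≠ 0) : HasDerivAt (sigmaFun h m) (m * (h x - x * h' x) / h x ^ 2) x := by
  have heq : (fun y => m * y / h y) =ᶠ[𝓝 x] sigmaFun h m := by
    filter_upwards [isOpen_ne.mem_nhds hx] with y hy
    simp [sigmaFun, hy]
  refine ((((hasDerivAt_id x).const_mul m).div hh hpos).congr_of_eventuallyEq
    heq.symm).congr_deriv ?_
  simp only [id]
  ring

def HasDerivBoundsAt (u : ℝ → ℝ) (a b x : ℝ) : Prop :=
  ∃ u', HasDerivAt u u' x ∧ |u x| ≤ a ∧ |u'| ≤ b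

namespace HasDerivBoundsAt

variable {u v : ℝ → ℝ} {a a' b b' c x : ℝ}

lemma mono (hu : HasDerivBoundsAt u a b x) (ha : a ≤ a') (hb : b ≤ b') :
    HasDerivBoundsAt u a' b' x :=
  let ⟨u', hu', hua, hub⟩ := hu
  ⟨u', hu', hua.trans ha, hub.trans hb⟩

lemma abs_deriv_le (hu : HasDerivBoundsAt u a b x) : |deriv u x| ≤ b :=
  let ⟨_, hu', _, hub⟩ := hu
  hu'.deriv ▸ hub

lemma mul (hu : HasDerivBoundsAt u a b x) (hv : HasDerivBoundsAt v 1 c x) :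
    HasDerivBoundsAt (fun y => u y * v y) a (b + a * c) x := by
  obtain ⟨u', hu', hua, hub⟩ := hu
  obtain ⟨v', hv', hv1, hvc⟩ := hv
  have ha : 0 ≤ a := (abs_nonneg _).trans hua
  refine ⟨u' * v x + u x * v', hu'.mul hv', ?_, ?_⟩
  · rw [abs_mul]
    nlinarith [abs_nonneg (u x), abs_nonneg (v x)]
  · calc |u' * v x + u x * v'| ≤ |u'| * |v x| + |u x| * |v'| := by
          rw [← abs_mul, ← abs_mul]; exact abs_add_le _ _
      _ ≤ b * 1 + a * c := by
          gcongr
          exact (abs_nonneg _).trans hub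
      _ = b + a * c := by ring

end HasDerivBoundsAt

/-- It dominates `1`, `1 / η` and `2 L / η`; these and their pairwise products bound all the
coefficients in the estimates of the `ω_i`. -/
noncomputable def omegaConst (η L : ℝ) : ℝ := 1 + (1 + 2 * L) / η

section omegaConst

variable {η L : ℝ}

lemma one_le_omegaConst (hη : 0 < η) (hL : 0 ≤ L) : 1 ≤ omegaConst η L :=
  le_add_of_nonneg_right (by positivity)

lemma one_div_le_omegaConst (hη : 0 < η) (hL : 0 ≤ L) : 1 / η ≤ omegaConst η L := by
  unfold omegaConst
  have : 1 / η ≤ (1 + 2 * L) / η := by gcongr; linarith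
  linarith

lemma two_mul_div_le_omegaConst (hη : 0 < η) : 2 * L / η ≤ omegaConst η L := by
  unfold omegaConst
  have : 2 * L / η ≤ (1 + 2 * L) / η := by gcongr; linarith
  linarith

end omegaConst

structure ControlledAt (h h' h'' : ℝ → ℝ) (m L η A x : ℝ) : Prop where
  pos : 0 < x
  eta_pos : 0 < η
  eventually_hasDerivAt : ∀ᶠ y in 𝓝 x, HasDerivAt h (h' y) y ∧ 0 < h y
  hasDerivAt_deriv : HasDerivAt h' (h'' x) x
  eta_mul_le : η * x ≤ h x
  abs_deriv_le : |h' x| ≤ L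
  abs_slope_le : |m| ≤ L
  abs_deriv_sub_le : |h' x - m| ≤ A * x
  abs_sub_mul_le : |h x - m * x| ≤ A * x ^ 2
  abs_deriv2_le : |h'' x| ≤ A

namespace ControlledAt

variable {h h' h'' : ℝ → ℝ} {m L η A x : ℝ}

lemma hasDerivAt (hc : ControlledAt h h' h'' m L η A x) : HasDerivAt h (h' x) x :=
  hc.eventually_hasDerivAt.self_of_nhds.1

lemma h_pos (hc : ControlledAt h h' h'' m L η A x) : 0 < h x :=
  hc.eventually_hasDerivAt.self_of_nhds.2

lemma bound_nonneg (hc : ControlledAt h h' h'' m L η A x) : 0 ≤ A :=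
  (abs_nonneg _).trans hc.abs_deriv2_le

lemma abs_sub_mul_deriv_le (hc : ControlledAt h h' h'' m L η A x) :
    |h x - x * h' x| ≤ 2 * A * x ^ 2 := by
  have h1 : |x * (h' x - m)| ≤ A * x ^ 2 := by
    rw [abs_mul, abs_of_pos hc.pos]
    nlinarith [hc.abs_deriv_sub_le, hc.pos]
  calc |h x - x * h' x| = |(h x - m * x) - x * (h' x - m)| := by ring_nf
    _ ≤ |h x - m * x| + |x * (h' x - m)| := abs_sub _ _
    _ ≤ 2 * A * x ^ 2 := by linarith [hc.abs_sub_mul_le]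

lemma abs_div_le (hc : ControlledAt h h' h'' m L η A x) {N c : ℝ} (hN : |N| ≤ c * x) :
    |N / h x| ≤ c / η := by
  have hcx : 0 ≤ c * x := (abs_nonneg N).trans hN
  have hc0 : 0 ≤ c := nonneg_of_mul_nonneg_left hcx hc.pos
  rw [abs_div, abs_of_pos hc.h_pos, div_le_div_iff₀ hc.h_pos hc.eta_pos]
  nlinarith [mul_le_mul_of_nonneg_right hN hc.eta_pos.le,
    mul_le_mul_of_nonneg_left hc.eta_mul_le hc0]

lemma abs_mul_sub_mul_deriv_le (hc : ControlledAt h h' h'' m L η A x) :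
    |m * (h x - x * h' x)| ≤ 2 * L * A * x * x := by
  rw [abs_mul]
  calc |m| * |h x - x * h' x| ≤ L * (2 * A * x ^ 2) :=
        mul_le_mul hc.abs_slope_le hc.abs_sub_mul_deriv_le (abs_nonneg _)
          ((abs_nonneg m).trans hc.abs_slope_le)
    _ = 2 * L * A * x * x := by ring

lemma hasDerivBoundsAt_sigmaFun_sub_one (hc : ControlledAt h h' h'' m L η A x) :
    HasDerivBoundsAt (fun y => sigmaFun h m y - 1) (A * x / η) (2 * L * A / η / η) x := by
  refine ⟨_, (hasDerivAt_sigmaFun hc.pos.ne' hc.hasDerivAt hc.h_pos.ne').sub_const 1, ?_, ?_⟩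
  · have heq : sigmaFun h m x - 1 = -(h x - m * x) / h x := by
      rw [sigmaFun, if_neg hc.pos.ne']
      field_simp [hc.h_pos.ne']
      ring
    show |sigmaFun h m x - 1| ≤ _
    rw [heq]
    refine hc.abs_div_le ?_
    rw [abs_neg]
    linarith [hc.abs_sub_mul_le]
  · have h1 : |m * (h x - x * h' x) / h x| ≤ 2 * L * A / η * x :=
      (hc.abs_div_le hc.abs_mul_sub_mul_deriv_le).trans_eq (by ring)
    rw [pow_two, ← div_div]
    exact hc.abs_div_le h1

lemma deriv_sigmaFun_mul_eventuallyEq (hc : ControlledAt h h' h'' m L η A x) :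
    (fun y => deriv (sigmaFun h m) y * h y) =ᶠ[𝓝 x] fun y => m * (h y - y * h' y) / h y := by
  filter_upwards [hc.eventually_hasDerivAt, isOpen_ne.mem_nhds hc.pos.ne'] with y ⟨hy, hpos⟩ hy0
  rw [(hasDerivAt_sigmaFun hy0 hy hpos.ne').deriv]
  field_simp

lemma hasDerivBoundsAt_deriv_sigmaFun_mul (hc : ControlledAt h h' h'' m L η A x) :
    HasDerivBoundsAt (fun y => deriv (sigmaFun h m) y * h y) (2 * L * A * x / η)
      (L * A / η + 2 * L ^ 2 * A / η / η) x := by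
  have hN : HasDerivAt (fun y => m * (h y - y * h' y)) (-(m * x * h'' x)) x := by
    refine ((hc.hasDerivAt.sub ((hasDerivAt_id x).mul hc.hasDerivAt_deriv)).const_mul
      m).congr_deriv ?_
    simp only [id]
    ring
  refine ⟨_, ((hN.div hc.hasDerivAt hc.h_pos.ne').congr_of_eventuallyEq
    hc.deriv_sigmaFun_mul_eventuallyEq), ?_, ?_⟩
  · exact (congrArg abs hc.deriv_sigmaFun_mul_eventuallyEq.eq_of_nhds).trans_le
      (hc.abs_div_le hc.abs_mul_sub_mul_deriv_le)
  · have h1 : |m * x * h'' x| ≤ L * A * x := by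
      rw [abs_mul, abs_mul, abs_of_pos hc.pos]
      have := mul_le_mul hc.abs_slope_le hc.abs_deriv2_le (abs_nonneg _)
        ((abs_nonneg m).trans hc.abs_slope_le)
      nlinarith [hc.pos]
    have h2 : |m * (h x - x * h' x) * h' x| ≤ 2 * L ^ 2 * A * x * x := by
      rw [abs_mul]
      have := mul_le_mul hc.abs_mul_sub_mul_deriv_le hc.abs_deriv_le (abs_nonneg _)
        ((abs_nonneg _).trans hc.abs_mul_sub_mul_deriv_le)
      linarith
    have h3 : |m * (h x - x * h' x) * h' x / h x| ≤ 2 * L ^ 2 * A / η * x :=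
      (hc.abs_div_le h2).trans_eq (by ring)
    calc |(-(m * x * h'' x) * h x - m * (h x - x * h' x) * h' x) / h x ^ 2|
        = |-(m * x * h'' x / h x) - m * (h x - x * h' x) * h' x / h x / h x| := by
          congr 1
          field_simp [hc.h_pos.ne']
      _ ≤ |m * x * h'' x / h x| + |m * (h x - x * h' x) * h' x / h x / h x| := by
          rw [← abs_neg (m * x * h'' x / h x)]; exact abs_sub _ _
      _ ≤ L * A / η + 2 * L ^ 2 * A / η / η := add_le_add (hc.abs_div_le h1) (hc.abs_div_le h3)

lemma abs_mul_deriv2_le {c : ℝ} (hc : ControlledAt h h' h'' m L η A x) (hc1 : |c| ≤ 1) :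
    |c * h'' x| ≤ A := by
  rw [abs_mul]
  nlinarith [abs_nonneg c, abs_nonneg (h'' x), hc.abs_deriv2_le]

lemma hasDerivBoundsAt_deriv_div_sqrt (hc : ControlledAt h h' h'' m L η A x) :
    HasDerivBoundsAt (fun y => h' y / √(1 + h' y ^ 2)) 1 A x :=
  ⟨_, (hasDerivAt_div_sqrt_one_add_sq (h' x)).comp x hc.hasDerivAt_deriv,
    abs_div_sqrt_one_add_sq_le_one _,
    hc.abs_mul_deriv2_le (abs_one_div_sqrt_one_add_sq_pow_three_le_one _)⟩

lemma hasDerivBoundsAt_one_div_sqrt (hc : ControlledAt h h' h'' m L η A x) :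
    HasDerivBoundsAt (fun y => 1 / √(1 + h' y ^ 2)) 1 A x :=
  ⟨_, (hasDerivAt_one_div_sqrt_one_add_sq (h' x)).comp x hc.hasDerivAt_deriv,
    abs_one_div_sqrt_one_add_sq_le_one _,
    hc.abs_mul_deriv2_le ((abs_neg _).trans_le (abs_div_sqrt_one_add_sq_pow_three_le_one _))⟩

lemma hasDerivBoundsAt_omega1 (hc : ControlledAt h h' h'' m L η A x) :
    HasDerivBoundsAt (omega1 h h' m) (A * x) A x := by
  obtain ⟨_, hd, -, hb⟩ := hc.hasDerivBoundsAt_deriv_div_sqrt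
  exact ⟨_, hd.sub_const _, (abs_sub_le_of_hasDerivAt_of_abs_le_one hasDerivAt_div_sqrt_one_add_sq
    abs_one_div_sqrt_one_add_sq_pow_three_le_one _ _).trans hc.abs_deriv_sub_le, hb⟩

lemma hasDerivBoundsAt_omega2 (hc : ControlledAt h h' h'' m L η A x) :
    HasDerivBoundsAt (omega2 h h' m) (A * x) A x := by
  obtain ⟨_, hd, -, hb⟩ := hc.hasDerivBoundsAt_one_div_sqrt
  refine ⟨_, hd.const_sub _, ?_, (abs_neg _).trans_le hb⟩
  calc |omega2 h h' m x| ≤ |m - h' x| :=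
        abs_sub_le_of_hasDerivAt_of_abs_le_one hasDerivAt_one_div_sqrt_one_add_sq
          (fun t => (abs_neg _).trans_le (abs_div_sqrt_one_add_sq_pow_three_le_one t)) _ _
    _ ≤ A * x := abs_sub_comm m (h' x) ▸ hc.abs_deriv_sub_le

lemma hasDerivBoundsAt_omega (hc : ControlledAt h h' h'' m L η A x) :
    ∀ g ∈ ([omega1 h h' m, omega2 h h' m, omega3 h h' m, omega4 h h' m, omega5 h h' m,
      omega6 h h' m] : List (ℝ → ℝ)),
      HasDerivBoundsAt g (omegaConst η L * (A * x))
        (omegaConst η L ^ 2 * A + omegaConst η L * (A * x) * A) x := by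
  set κ := omegaConst η L
  have hη := hc.eta_pos
  have hL : 0 ≤ L := (abs_nonneg m).trans hc.abs_slope_le
  have hA := hc.bound_nonneg
  have hAx : 0 ≤ A * x := mul_nonneg hA hc.pos.le
  have h1 : 1 ≤ κ := one_le_omegaConst hη hL
  have hs : 1 / η ≤ κ := one_div_le_omegaConst hη hL
  have ht : 2 * L / η ≤ κ := two_mul_div_le_omegaConst hη
  have hs0 : 0 ≤ 1 / η := by positivity
  have ht0 : 0 ≤ 2 * L / η := by positivity
  have hκA : A ≤ κ ^ 2 * A := le_mul_of_one_le_left hA (one_le_pow₀ h1)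
  have hAxA : 0 ≤ κ * (A * x) * A := by positivity
  have hΦ := hc.hasDerivBoundsAt_deriv_div_sqrt
  have hΨ := hc.hasDerivBoundsAt_one_div_sqrt
  have hω₁₂ : A * x ≤ κ * (A * x) := le_mul_of_one_le_left hAx h1
  have hu_val : 2 * L * A * x / η ≤ κ * (A * x) := by
    calc 2 * L * A * x / η = 2 * L / η * (A * x) := by ring
      _ ≤ κ * (A * x) := by gcongr
  have hu_der : L * A / η + 2 * L ^ 2 * A / η / η + 2 * L * A * x / η * A ≤
      κ ^ 2 * A + κ * (A * x) * A := by
    have e : L * A / η + 2 * L ^ 2 * A / η / η =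
        (2 * L / η / 2 + (2 * L / η) ^ 2 / 2) * A := by ring
    rw [e]
    gcongr
    nlinarith
  have hσ_val : A * x / η ≤ κ * (A * x) := by
    calc A * x / η = 1 / η * (A * x) := by ring
      _ ≤ κ * (A * x) := by gcongr
  have hσ_der : 2 * L * A / η / η + A * x / η * A ≤ κ ^ 2 * A + κ * (A * x) * A := by
    have e : 2 * L * A / η / η = 2 * L / η * (1 / η) * A := by ring
    rw [e, pow_two]
    gcongr
  intro g hg
  simp only [List.mem_cons, List.not_mem_nil, or_false] at hg
  rcases hg with rfl | rfl | rfl | rfl | rfl | rfl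
  · exact hc.hasDerivBoundsAt_omega1.mono hω₁₂ (hκA.trans (le_add_of_nonneg_right hAxA))
  · exact hc.hasDerivBoundsAt_omega2.mono hω₁₂ (hκA.trans (le_add_of_nonneg_right hAxA))
  · exact (hc.hasDerivBoundsAt_deriv_sigmaFun_mul.mul hΦ).mono hu_val hu_der
  · exact (hc.hasDerivBoundsAt_sigmaFun_sub_one.mul hΦ).mono hσ_val hσ_der
  · exact (hc.hasDerivBoundsAt_deriv_sigmaFun_mul.mul hΨ).mono hu_val hu_der
  · exact (hc.hasDerivBoundsAt_sigmaFun_sub_one.mul hΨ).mono hσ_val hσ_der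

end ControlledAt

lemma controlledAt_of_integral_sq_le {h h' h'' : ℝ → ℝ} {β L η M r x : ℝ} (hβ : 0 < β)
    (hη : 0 < η) (hh : ∀ x ∈ Icc 0 β, HasDerivWithinAt h (h' x) (Icc 0 β) x)
    (hh' : ∀ x ∈ Icc 0 β, HasDerivWithinAt h' (h'' x) (Icc 0 β) x)
    (hh'' : ContinuousOn h'' (Icc 0 β)) (hpos : ∀ x ∈ Ioo 0 β, 0 < h x) (h0 : h 0 = 0)
    (hm0 : 2 * η ≤ h' 0) (hmβ : h' β ≤ -(2 * η))
    (hlip : ∀ x1 ∈ Icc 0 β, ∀ x2 ∈ Icc 0 β, |h x1 - h x2| ≤ L * |x1 - x2|)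
    (hL2 : ∫ x in (0 : ℝ)..β, |h'' x| ^ 2 ≤ M) (hrM : r ≤ η ^ 2 / (4 * M)) (hx : x ∈ Ioo 0 r) :
    ControlledAt h h' h'' (h' 0) L η (sSup ((fun s => |h'' s|) '' Ioo 0 r)) x := by
  set A := sSup ((fun s => |h'' s|) '' Ioo 0 r)
  obtain ⟨hx0, hxr⟩ := hx
  have hr : 0 < r := hx0.trans hxr
  have hM : 0 < M := by
    rcases div_pos_iff.1 (hr.trans_le hrM) with ⟨-, h4M⟩ | ⟨hη2, -⟩
    · linarith
    · exact absurd hη2 (pow_pos hη 2).not_gt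
  have hrβ : r < β := hrM.trans_lt (sq_div_lt_of_integral_sq_le hη hM hβ.le hh' hh'' hm0 hmβ hL2)
  have hxβ : x ∈ Ioo 0 β := ⟨hx0, hxr.trans hrβ⟩
  have hsubx : Icc 0 x ⊆ Icc 0 β := Icc_subset_Icc le_rfl (hxr.trans hrβ).le
  have hA0 : 0 ≤ A := sSup_image_abs_nonneg h'' _
  have hA : ∀ t ∈ Icc 0 r, |h'' t| ≤ A :=
    (hh''.mono (Icc_subset_Icc le_rfl hrβ.le)).abs.le_sSup_image_Ioo hr
  have hhx : ∀ y ∈ Icc 0 x, HasDerivWithinAt h (h' y) (Icc 0 x) y :=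
    fun y hy => (hh y (hsubx hy)).mono hsubx
  have hdm : ∀ y ∈ Icc 0 x, |h' y - h' 0| ≤ A * y := by
    intro y hy
    have hsuby : Icc 0 y ⊆ Icc 0 β := (Icc_subset_Icc le_rfl hy.2).trans hsubx
    simpa using abs_sub_sub_mul_le (m := 0) hy.1 (fun z hz => (hh' z (hsuby hz)).mono hsuby)
      (fun z hz => by simpa using hA z ⟨hz.1, hz.2.trans (hy.2.trans hxr.le)⟩)
  have hL : ∀ t ∈ Icc 0 β, |h' t| ≤ L := abs_le_of_hasDerivWithinAt_of_lipschitz hβ hh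
    (fun t ht => (hh' t ht).continuousWithinAt) hlip
  refine
    { pos := hx0
      eta_pos := hη
      eventually_hasDerivAt := ?_
      hasDerivAt_deriv := (hh' x (Ioo_subset_Icc_self hxβ)).hasDerivAt (Icc_mem_nhds hxβ.1 hxβ.2)
      eta_mul_le := ?_
      abs_deriv_le := hL x (Ioo_subset_Icc_self hxβ)
      abs_slope_le := hL 0 (left_mem_Icc.2 hβ.le)
      abs_deriv_sub_le := hdm x (right_mem_Icc.2 hx0.le)
      abs_sub_mul_le := ?_
      abs_deriv2_le := hA x ⟨hx0.le, hxr.le⟩ }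
  · filter_upwards [isOpen_Ioo.mem_nhds hxβ] with y hy
    exact ⟨(hh y (Ioo_subset_Icc_self hy)).hasDerivAt (Icc_mem_nhds hy.1 hy.2), hpos y hy⟩
  · have := abs_sub_sub_mul_le (m := h' 0) hx0.le hhx fun y hy =>
      abs_deriv_sub_le_half hη hM hh' hh'' hL2 (hsubx hy) (hy.2.trans (hxr.le.trans hrM))
    rw [h0, sub_zero, sub_zero] at this
    nlinarith [(abs_le.1 this).1]
  · have := abs_sub_sub_mul_le (m := h' 0) hx0.le hhx fun y hy =>
      (hdm y hy).trans (mul_le_mul_of_nonneg_left hy.2 hA0)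
    rw [h0, sub_zero, sub_zero] at this
    linarith

theorem stmt_7_general (L0 η0 M : ℝ) (hη0 : 0 < η0) :
    ∃ C : ℝ, 0 < C ∧
      ∀ (β : ℝ) (h h' h'' h''' h'''' : ℝ → ℝ) (r : ℝ),
        0 < β →
        (∀ x ∈ Set.Icc (0:ℝ) β, HasDerivWithinAt h (h' x) (Set.Icc 0 β) x) →
        (∀ x ∈ Set.Icc (0:ℝ) β, HasDerivWithinAt h' (h'' x) (Set.Icc 0 β) x) →
        (∀ x ∈ Set.Icc (0:ℝ) β, HasDerivWithinAt h'' (h''' x) (Set.Icc 0 β) x) →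
        ContinuousOn h''' (Set.Icc 0 β) →
        (∀ x ∈ Set.Ioo (0:ℝ) β, 0 < h x) →
        h 0 = 0 → h β = 0 →
        2 * η0 ≤ h' 0 → h' β ≤ -(2 * η0) →
        (∀ x1 ∈ Set.Icc (0:ℝ) β, ∀ x2 ∈ Set.Icc (0:ℝ) β, |h x1 - h x2| ≤ L0 * |x1 - x2|) →
        (∫ x in (0:ℝ)..β, |h'' x| ^ 2) ≤ M →
        (∀ x ∈ Set.Icc (0:ℝ) β, h''' x = h''' 0 + ∫ s in (0:ℝ)..x, h'''' s) →
        IntervalIntegrable h'''' volume 0 β →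
        0 < r → r ≤ η0 ^ 2 / (4 * M) →
        ∀ g ∈ ([omega1 h h' (h' 0), omega2 h h' (h' 0), omega3 h h' (h' 0),
                omega4 h h' (h' 0), omega5 h h' (h' 0), omega6 h h' (h' 0)] : List (ℝ → ℝ)),
          (∀ x ∈ Set.Ioo (0:ℝ) r,
              |g x| ≤
                C * r * sSup ((fun s => |h'' s|) '' Set.Ioo 0 r) +
                  C * r ^ 2 * (sSup ((fun s => |h''' s|) '' Set.Ioo 0 r) +
                    ∫ t in (0:ℝ)..r, |h'''' t|)) ∧
          (∀ x ∈ Set.Ioo (0:ℝ) r,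
              |deriv g x| ≤
                C * sSup ((fun s => |h'' s|) '' Set.Ioo 0 r) +
                  C * r * ((sSup ((fun s => |h'' s|) '' Set.Ioo 0 r)) ^ 2 +
                    sSup ((fun s => |h''' s|) '' Set.Ioo 0 r) + ∫ t in (0:ℝ)..r, |h'''' t|) +
                  C * r ^ 3 * ((sSup ((fun s => |h''' s|) '' Set.Ioo 0 r)) ^ 2 +
                    (∫ t in (0:ℝ)..r, |h'''' t|) ^ 2)) := by
  have hκ : 1 ≤ omegaConst η0 |L0| := one_le_omegaConst hη0 (abs_nonneg L0)
  refine ⟨omegaConst η0 |L0| ^ 2, by positivity, ?_⟩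
  intro β h h' h'' h''' h'''' r hβ hh hh' hh'' _ hpos h0 _ hm0 hmβ hlip hL2 _ _ hr hrM g hg
  set κ := omegaConst η0 |L0|
  set A := sSup ((fun s => |h'' s|) '' Ioo 0 r)
  set B := sSup ((fun s => |h''' s|) '' Ioo 0 r)
  set D := ∫ t in (0:ℝ)..r, |h'''' t|
  have hA : 0 ≤ A := sSup_image_abs_nonneg h'' _
  have hB : 0 ≤ B := sSup_image_abs_nonneg h''' _
  have hD : 0 ≤ D := intervalIntegral.integral_nonneg hr.le fun t _ => abs_nonneg _
  have hbounds (x : ℝ) (hx : x ∈ Ioo 0 r) :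
      HasDerivBoundsAt g (κ * (A * x)) (κ ^ 2 * A + κ * (A * x) * A) x :=
    (controlledAt_of_integral_sq_le hβ hη0 hh hh' (fun x hx => (hh'' x hx).continuousWithinAt)
      hpos h0 hm0 hmβ
      (fun x1 h1 x2 h2 => (hlip x1 h1 x2 h2).trans (by gcongr; exact le_abs_self L0))
      hL2 hrM hx).hasDerivBoundsAt_omega g hg
  have hκAx (x : ℝ) (hx : x ∈ Ioo 0 r) : κ * (A * x) ≤ κ ^ 2 * r * A := by
    have : κ ≤ κ ^ 2 := le_self_pow₀ hκ two_ne_zero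
    have : 0 ≤ A * x := mul_nonneg hA hx.1.le
    calc κ * (A * x) ≤ κ ^ 2 * (A * r) := by gcongr; exact hx.2.le
      _ = κ ^ 2 * r * A := by ring
  constructor
  · intro x hx
    obtain ⟨_, -, hval, -⟩ := hbounds x hx
    calc |g x| ≤ κ ^ 2 * r * A := hval.trans (hκAx x hx)
      _ ≤ _ := le_add_of_nonneg_right (by positivity)
  · intro x hx
    calc |deriv g x| ≤ κ ^ 2 * A + κ * (A * x) * A := (hbounds x hx).abs_deriv_le
      _ ≤ κ ^ 2 * A + κ ^ 2 * r * (A ^ 2 + B + D) := by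
          have := mul_le_mul_of_nonneg_right (hκAx x hx) hA
          nlinarith [mul_nonneg (mul_nonneg (sq_nonneg κ) hr.le) (add_nonneg hB hD)]
      _ ≤ _ := le_add_of_nonneg_right (by positivity)

/-- `L^∞` estimates for the functions `ω_i` and their derivatives, with a constant `C`
depending only on `η0`, `M`, and `L0`. -/
theorem stmt_7 (L0 η0 M : ℝ) (hL0 : 1 ≤ L0) (hη0 : 0 < η0) (hη0' : η0 < 1) (hM : 1 < M) :
    ∃ C : ℝ, 0 < C ∧
      ∀ (β : ℝ) (h h' h'' h''' h'''' : ℝ → ℝ) (r : ℝ),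
        0 < β →
        (∀ x ∈ Set.Icc (0:ℝ) β, HasDerivWithinAt h (h' x) (Set.Icc 0 β) x) →
        (∀ x ∈ Set.Icc (0:ℝ) β, HasDerivWithinAt h' (h'' x) (Set.Icc 0 β) x) →
        (∀ x ∈ Set.Icc (0:ℝ) β, HasDerivWithinAt h'' (h''' x) (Set.Icc 0 β) x) →
        ContinuousOn h''' (Set.Icc 0 β) →
        (∀ x ∈ Set.Ioo (0:ℝ) β, 0 < h x) →
        h 0 = 0 → h β = 0 →
        2 * η0 ≤ h' 0 → h' β ≤ -(2 * η0) →
        (∀ x1 ∈ Set.Icc (0:ℝ) β, ∀ x2 ∈ Set.Icc (0:ℝ) β, |h x1 - h x2| ≤ L0 * |x1 - x2|) →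
        (∫ x in (0:ℝ)..β, |h'' x| ^ 2) ≤ M →
        (∀ x ∈ Set.Icc (0:ℝ) β, h''' x = h''' 0 + ∫ s in (0:ℝ)..x, h'''' s) →
        IntervalIntegrable h'''' volume 0 β →
        0 < r → r ≤ η0 ^ 2 / (4 * M) →
        ∀ g ∈ ([omega1 h h' (h' 0), omega2 h h' (h' 0), omega3 h h' (h' 0),
                omega4 h h' (h' 0), omega5 h h' (h' 0), omega6 h h' (h' 0)] : List (ℝ → ℝ)),
          (∀ x ∈ Set.Ioo (0:ℝ) r,
              |g x| ≤
                C * r * sSup ((fun s => |h'' s|) '' Set.Ioo 0 r) +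
                  C * r ^ 2 * (sSup ((fun s => |h''' s|) '' Set.Ioo 0 r) +
                    ∫ t in (0:ℝ)..r, |h'''' t|)) ∧
          (∀ x ∈ Set.Ioo (0:ℝ) r,
              |deriv g x| ≤
                C * sSup ((fun s => |h'' s|) '' Set.Ioo 0 r) +
                  C * r * ((sSup ((fun s => |h'' s|) '' Set.Ioo 0 r)) ^ 2 +
                    sSup ((fun s => |h''' s|) '' Set.Ioo 0 r) + ∫ t in (0:ℝ)..r, |h'''' t|) +
                  C * r ^ 3 * ((sSup ((fun s => |h''' s|) '' Set.Ioo 0 r)) ^ 2 +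
                    (∫ t in (0:ℝ)..r, |h'''' t|) ^ 2)) :=
  stmt_7_general L0 η0 M hη0
end

section
/- There exists a constant ξ0 ∈ (1/2, 1), depending only on λ and μ, such that for every ω with 0 < ω ≤ π/2, the equation sin²(zω) = K₁ − K z² sin²ω has no solution z ∈ ℂ with Re z ∈ (0, ξ0). -/
/-!
Write `z = x + iy` with `0 < x < ξ0`. For `0 < xω < π/2` the imaginary part of `sin²(zω)` is
`sin(2xω) sinh(2yω)/2`, which has the sign of `y`, while the imaginary part of the right-hand side,
`-2Kxy sin²ω`, has the opposite sign; so a solution is real. For real `z = x`, `|sin t| ≤ |t|`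
gives `sin²(xω) + K x² sin²ω ≤ x² (ω² + 1) < 1 ≤ K₁` as soon as `x² (1 + π²/4) < 1`.
-/

open Real

lemma Complex.im_sin_sq (z : ℂ) :
    (Complex.sin z ^ 2).im =
      2 * (Real.sin z.re * Real.cosh z.im) * (Real.cos z.re * Real.sinh z.im) := by
  conv_lhs => rw [← Complex.re_add_im z]
  rw [Complex.sin_add_mul_I, ← Complex.ofReal_sin, ← Complex.ofReal_cos,
    ← Complex.ofReal_cosh, ← Complex.ofReal_sinh, sq]
  simp only [Complex.mul_im, Complex.mul_re, Complex.add_re, Complex.add_im, Complex.ofReal_re,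
    Complex.ofReal_im, Complex.I_re, Complex.I_im]
  ring

lemma Real.mul_sinh_pos {y : ℝ} (hy : y ≠ 0) : 0 < y * Real.sinh y := by
  rcases hy.lt_or_gt with hy | hy
  · exact mul_pos_of_neg_of_neg hy (Real.sinh_neg_iff.2 hy)
  · exact mul_pos hy (Real.sinh_pos_iff.2 hy)

lemma Complex.im_mul_im_sin_sq_pos {z : ℂ} (h0 : 0 < z.re) (hπ : z.re < π / 2) (hy : z.im ≠ 0) :
    0 < z.im * (Complex.sin z ^ 2).im := by
  have hs := Real.sin_pos_of_pos_of_lt_pi h0 (by linarith [Real.pi_pos])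
  have hc := Real.cos_pos_of_mem_Ioo ⟨by linarith, hπ⟩
  have hC := Real.cosh_pos z.im
  have hyS := Real.mul_sinh_pos hy
  rw [Complex.im_sin_sq]
  calc 0 < 2 * Real.sin z.re * Real.cosh z.im * Real.cos z.re * (z.im * Real.sinh z.im) := by
        positivity
    _ = _ := by ring

-- `0.53 ^ 2 * (1 + π ^ 2 / 4) < 1`; any bound below `0.537` would do.
lemma Real.sin_mul_sq_add_sq_lt_one {x ω : ℝ} (hx : |x| < 0.53) (hω : |ω| ≤ π / 2) :
    Real.sin (x * ω) ^ 2 + x ^ 2 < 1 := by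
  have hπ := Real.pi_lt_d2
  have hx2 : x ^ 2 < 0.53 ^ 2 := sq_lt_sq' (abs_lt.1 hx).1 (abs_lt.1 hx).2
  have hω2 : ω ^ 2 ≤ (π / 2) ^ 2 := sq_le_sq' (abs_le.1 hω).1 (abs_le.1 hω).2
  calc Real.sin (x * ω) ^ 2 + x ^ 2 ≤ x ^ 2 * (ω ^ 2 + 1) := by
        nlinarith [Real.sin_sq_le_sq (x := x * ω)]
    _ < 1 := by nlinarith [sq_nonneg x, Real.pi_pos]

lemma sin_sq_mul_ne_of_re_lt {K K₁ ω : ℝ} {z : ℂ} (hK0 : 0 ≤ K) (hK1 : K ≤ 1) (hK₁ : 1 ≤ K₁)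
    (hω : 0 < ω) (hωπ : ω ≤ π / 2) (hx : 0 < z.re) (hxξ : z.re < 0.53) :
    Complex.sin (z * ω) ^ 2 ≠ K₁ - K * z ^ 2 * (Real.sin ω : ℂ) ^ 2 := by
  intro heq
  have hy : z.im = 0 := by
    by_contra hy
    have hre : (z * ω).re = z.re * ω := by
      simp only [Complex.mul_re, Complex.ofReal_re, Complex.ofReal_im, mul_zero, sub_zero]
    have hpos := Complex.im_mul_im_sin_sq_pos (z := z * ω)
      (hre ▸ mul_pos hx hω) (by rw [hre]; nlinarith) (by simpa using And.intro hy hω.ne')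
    have hrhs : (z * ω).im * ((K₁ : ℂ) - K * z ^ 2 * (Real.sin ω : ℂ) ^ 2).im =
        -(2 * K * z.re * ω * (z.im * Real.sin ω) ^ 2) := by
      simp [sq, Complex.sin_ofReal_re]; ring
    rw [heq, hrhs] at hpos
    have : 0 ≤ 2 * K * z.re * ω * (z.im * Real.sin ω) ^ 2 := by positivity
    linarith
  have hreal : Real.sin (z.re * ω) ^ 2 = K₁ - K * z.re ^ 2 * Real.sin ω ^ 2 := by
    rw [show z = (z.re : ℂ) from Complex.ext rfl (by simpa using hy)] at heq
    exact_mod_cast heq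
  have hlt := Real.sin_mul_sq_add_sq_lt_one (x := z.re) (ω := ω)
    (by rwa [abs_of_pos hx]) (by rwa [abs_of_pos hω])
  nlinarith [Real.sin_sq_le_one ω, mul_le_mul hK1 (Real.sin_sq_le_one ω) (sq_nonneg _) zero_le_one,
    sq_nonneg z.re]

lemma one_le_lame_K₁ {μ lam : ℝ} (hμ : 0 < μ) (hlm : 0 < lam + μ) :
    1 ≤ (lam + 2 * μ) ^ 2 / ((lam + μ) * (lam + 3 * μ)) := by
  rw [one_le_div (by nlinarith)]
  nlinarith

/-- There is `ξ0 ∈ (1/2, 1)`, depending only on the Lamé constants `λ` and `μ`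
(with `μ > 0` and `λ + μ > 0`), such that for every angle `0 < ω ≤ π/2` the equation
`sin²(zω) = K₁ - K z² sin²ω`, with `K = (λ+μ)/(λ+3μ)` and `K₁ = (λ+2μ)²/((λ+μ)(λ+3μ))`,
has no complex solution `z` with `Re z ∈ (0, ξ0)`. -/
theorem stmt_9 (μ lam : ℝ) (hμ : 0 < μ) (hlm : 0 < lam + μ) :
    ∃ ξ0 : ℝ, 1 / 2 < ξ0 ∧ ξ0 < 1 ∧
      ∀ ω : ℝ, 0 < ω → ω ≤ Real.pi / 2 →
        ∀ z : ℂ, 0 < z.re → z.re < ξ0 →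
          Complex.sin (z * (ω : ℂ)) ^ 2 ≠
            (((lam + 2 * μ) ^ 2 / ((lam + μ) * (lam + 3 * μ)) : ℝ) : ℂ) -
              (((lam + μ) / (lam + 3 * μ) : ℝ) : ℂ) * z ^ 2 * ((Real.sin ω : ℝ) : ℂ) ^ 2 := by
  have hlm3 : 0 < lam + 3 * μ := by linarith
  refine ⟨0.53, by norm_num, by norm_num, fun ω hω hωπ z hx hxξ => ?_⟩
  exact sin_sq_mul_ne_of_re_lt (div_nonneg hlm.le hlm3.le) ((div_le_one hlm3).2 (by linarith))
    (one_le_lame_K₁ hμ hlm) hω hωπ hx hxξ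
end

section
/- For every continuously differentiable function v : ℝ² → ℝ with v(x,0) = 0 for all x ∈ [α, α+r], one has ∫_{Ω_h^{α,α+r}} |v(x,y)|^p dx dy ≤ (L0 r)^p ∫_{Ω_h^{α,α+r}} |∇v(x,y)|^p dx dy; in particular ‖v‖_{L^p(Ω_h^{α,α+r})} ≤ L0 r ‖∇v‖_{L^p(Ω_h^{α,α+r})}. -/
/-!
On each vertical segment `{x} × (0, h x)` the function `v` vanishes at the bottom, so the
fundamental theorem of calculus and Hölder's inequality give
`∫₀^{h x} |v(x, ·)|^p ≤ h(x)^p ∫₀^{h x} |∂ᵧv(x, ·)|^p`. Since `h α = 0`, the Lipschitz bound gives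
`h x ≤ L0 r` on `(α, α + r)`, and integrating over `x` (Fubini on the region below the graph of
`h`) yields the first inequality; the second is its `p`-th root.
-/

open MeasureTheory Set
open scoped ENNReal

theorem isOpen_regionBetween {X : Type*} [TopologicalSpace X] {f g : X → ℝ} {s : Set X}
    (hs : IsOpen s) (hf : ContinuousOn f s) (hg : ContinuousOn g s) :
    IsOpen (regionBetween f g s) := by
  have hR : regionBetween f g s =
      (s ×ˢ univ) ∩ (fun q : X × ℝ => (q.2 - f q.1, g q.1 - q.2)) ⁻¹' (Ioi 0 ×ˢ Ioi 0) := by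
    ext ⟨x, y⟩
    simp [regionBetween, sub_pos]
  have hc : ContinuousOn (fun q : X × ℝ => (q.2 - f q.1, g q.1 - q.2)) (s ×ˢ univ) :=
    (continuousOn_snd.sub (hf.comp continuousOn_fst fun q hq => hq.1)).prodMk
      ((hg.comp continuousOn_fst fun q hq => hq.1).sub continuousOn_snd)
  rw [hR]
  exact hc.isOpen_inter_preimage (hs.prod isOpen_univ) (isOpen_Ioi.prod isOpen_Ioi)

theorem setLIntegral_regionBetween {X : Type*} [MeasurableSpace X] {μ : Measure X} [SFinite μ]
    {f g : X → ℝ} {s : Set X} (hs : MeasurableSet s) (hR : MeasurableSet (regionBetween f g s))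
    {F : X × ℝ → ℝ≥0∞} (hF : Measurable F) :
    ∫⁻ q in regionBetween f g s, F q ∂μ.prod volume =
      ∫⁻ x in s, (∫⁻ y in Ioo (f x) (g x), F (x, y)) ∂μ := by
  rw [← lintegral_indicator hR, lintegral_prod _ (hF.indicator hR).aemeasurable,
    ← lintegral_indicator hs]
  congr 1
  ext x
  by_cases hx : x ∈ s
  · rw [indicator_of_mem hx, ← lintegral_indicator measurableSet_Ioo]
    congr 1
    ext y
    by_cases hy : y ∈ Ioo (f x) (g x)
    · rw [indicator_of_mem hy, indicator_of_mem (show (x, y) ∈ regionBetween f g s from ⟨hx, hy⟩)]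
    · rw [indicator_of_notMem hy, indicator_of_notMem fun h => hy h.2]
  · simp [regionBetween, hx]

theorem integral_rpow_norm_le_of_lintegral_le {X E F : Type*} [MeasurableSpace X] {μ : Measure X}
    [NormedAddCommGroup E] [NormedAddCommGroup F] {u : X → E} {w : X → F} {c p : ℝ} (hc : 0 ≤ c)
    (hp : 0 ≤ p)
    (hu : AEStronglyMeasurable u μ) (hw : Integrable (fun x => ‖w x‖ ^ p) μ)
    (h : ∫⁻ x, ‖u x‖ₑ ^ p ∂μ ≤ ENNReal.ofReal c * ∫⁻ x, ‖w x‖ₑ ^ p ∂μ) :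
    ∫ x, ‖u x‖ ^ p ∂μ ≤ c * ∫ x, ‖w x‖ ^ p ∂μ := by
  have hfin := hw.lintegral_lt_top
  rw [integral_eq_lintegral_of_nonneg_ae (ae_of_all _ fun _ => by positivity)
      (hu.norm.aemeasurable.pow_const p).aestronglyMeasurable,
    integral_eq_lintegral_of_nonneg_ae (ae_of_all _ fun _ => by positivity) hw.1]
  simp_rw [← ENNReal.ofReal_rpow_of_nonneg (norm_nonneg _) hp, ofReal_norm] at hfin ⊢
  calc (∫⁻ x, ‖u x‖ₑ ^ p ∂μ).toReal ≤ (ENNReal.ofReal c * ∫⁻ x, ‖w x‖ₑ ^ p ∂μ).toReal :=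
        ENNReal.toReal_mono (ENNReal.mul_ne_top ENNReal.ofReal_ne_top hfin.ne) h
    _ = c * (∫⁻ x, ‖w x‖ₑ ^ p ∂μ).toReal := by rw [ENNReal.toReal_mul, ENNReal.toReal_ofReal hc]

theorem rpow_one_div_le_mul_of_le_rpow_mul {A B c p : ℝ} (hA : 0 ≤ A) (hB : 0 ≤ B) (hc : 0 ≤ c)
    (hp : 0 < p) (h : A ≤ c ^ p * B) : A ^ (1 / p) ≤ c * B ^ (1 / p) :=
  calc A ^ (1 / p) ≤ (c ^ p * B) ^ (1 / p) := Real.rpow_le_rpow hA h (by positivity)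
    _ = c * B ^ (1 / p) := by
      rw [Real.mul_rpow (by positivity) hB, ← Real.rpow_mul hc, mul_one_div_cancel hp.ne',
        Real.rpow_one]

section

variable {E : Type*} [NormedAddCommGroup E] [NormedSpace ℝ E] [CompleteSpace E]

theorem lintegral_rpow_enorm_Ioo_le_of_hasDerivAt {f f' : ℝ → E} {b p : ℝ} (hp : 1 ≤ p)
    (hf : ∀ t, HasDerivAt f (f' t) t) (hf' : Continuous f') (hf0 : f 0 = 0) :
    ∫⁻ y in Ioo 0 b, ‖f y‖ₑ ^ p ≤ ENNReal.ofReal b ^ p * ∫⁻ t in Ioo 0 b, ‖f' t‖ₑ ^ p := by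
  have hp0 : 0 < p := one_pos.trans_le hp
  set I := ∫⁻ t in Ioo 0 b, ‖f' t‖ₑ ^ p
  have bound : ∀ y ∈ Ioo 0 b, ‖f y‖ₑ ≤ ∫⁻ t in Ioo 0 b, ‖f' t‖ₑ := by
    intro y hy
    have ftc : ∫ t in Ioc 0 y, f' t = f y := by
      rw [← intervalIntegral.integral_of_le hy.1.le,
        intervalIntegral.integral_eq_sub_of_hasDerivAt (fun t _ => hf t)
          (hf'.intervalIntegrable 0 y), hf0, sub_zero]
    calc ‖f y‖ₑ ≤ ∫⁻ t in Ioc 0 y, ‖f' t‖ₑ := ftc ▸ enorm_integral_le_lintegral_enorm _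
      _ ≤ ∫⁻ t in Ioo 0 b, ‖f' t‖ₑ := lintegral_mono_set (Ioc_subset_Ioo_right hy.2)
  have holder : ∫⁻ t in Ioo 0 b, ‖f' t‖ₑ ≤ I ^ (1 / p) * ENNReal.ofReal b ^ (1 - 1 / p) := by
    simpa [eLpNorm'_eq_lintegral_enorm, Real.volume_Ioo] using
      eLpNorm'_le_eLpNorm'_mul_rpow_measure_univ (μ := volume.restrict (Ioo 0 b)) one_pos hp
        hf'.aestronglyMeasurable
  calc ∫⁻ y in Ioo 0 b, ‖f y‖ₑ ^ p
      ≤ ∫⁻ _ in Ioo 0 b, (I ^ (1 / p) * ENNReal.ofReal b ^ (1 - 1 / p)) ^ p :=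
        setLIntegral_mono' measurableSet_Ioo fun y hy =>
          ENNReal.rpow_le_rpow ((bound y hy).trans holder) hp0.le
    _ = ENNReal.ofReal b ^ p * I := by
        rw [setLIntegral_const, Real.volume_Ioo, sub_zero, ENNReal.mul_rpow_of_nonneg _ _ hp0.le,
          ← ENNReal.rpow_mul, ← ENNReal.rpow_mul, one_div_mul_cancel hp0.ne', ENNReal.rpow_one]
        have hexp : (1 - 1 / p) * p = p - 1 := by field_simp
        have hb : ENNReal.ofReal b ^ (p - 1) * ENNReal.ofReal b = ENNReal.ofReal b ^ p := by
          conv_rhs => rw [← sub_add_cancel p 1]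
          rw [ENNReal.rpow_add_of_nonneg _ _ (sub_nonneg.2 hp) zero_le_one, ENNReal.rpow_one]
        rw [hexp, mul_assoc, hb, mul_comm]

theorem lintegral_rpow_enorm_regionBetween_le {v : ℝ × ℝ → E} (hv : ContDiff ℝ 1 v)
    {g : ℝ → ℝ} {s : Set ℝ} {b p : ℝ} (hp : 1 ≤ p) (hs : IsOpen s) (hg : ContinuousOn g s)
    (hgb : ∀ x ∈ s, g x ≤ b) (hv0 : ∀ x ∈ s, v (x, 0) = 0) :
    ∫⁻ q in regionBetween 0 g s, ‖v q‖ₑ ^ p ≤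
      ENNReal.ofReal b ^ p * ∫⁻ q in regionBetween 0 g s, ‖fderiv ℝ v q‖ₑ ^ p := by
  have hR : MeasurableSet (regionBetween 0 g s) :=
    (isOpen_regionBetween hs continuousOn_const hg).measurableSet
  have hDv : Continuous (fderiv ℝ v) := hv.continuous_fderiv one_ne_zero
  rw [Measure.volume_eq_prod,
    setLIntegral_regionBetween hs.measurableSet hR (hv.continuous.enorm.measurable.pow_const p),
    setLIntegral_regionBetween hs.measurableSet hR (hDv.enorm.measurable.pow_const p),
    ← lintegral_const_mul' _ _ (ENNReal.rpow_ne_top_of_nonneg (by linarith) ENNReal.ofReal_ne_top)]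
  refine setLIntegral_mono' hs.measurableSet fun x hx => ?_
  have hslice : ∀ t, HasDerivAt (fun t => v (x, t)) (fderiv ℝ v (x, t) (0, 1)) t := fun t =>
    (hv.differentiable one_ne_zero (x, t)).hasFDerivAt.comp_hasDerivAt t
      ((hasDerivAt_const t x).prodMk (hasDerivAt_id t))
  calc ∫⁻ y in Ioo 0 (g x), ‖v (x, y)‖ₑ ^ p
      ≤ ENNReal.ofReal (g x) ^ p * ∫⁻ t in Ioo 0 (g x), ‖fderiv ℝ v (x, t) (0, 1)‖ₑ ^ p :=
        lintegral_rpow_enorm_Ioo_le_of_hasDerivAt hp hslice (by fun_prop) (hv0 x hx)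
    _ ≤ ENNReal.ofReal b ^ p * ∫⁻ t in Ioo 0 (g x), ‖fderiv ℝ v (x, t)‖ₑ ^ p := by
        gcongr with t
        · exact hgb x hx
        · simpa [enorm_eq_nnnorm, Prod.nnnorm_def] using (fderiv ℝ v (x, t)).le_opENorm (0, 1)

theorem integral_rpow_norm_regionBetween_le {v : ℝ × ℝ → E} (hv : ContDiff ℝ 1 v)
    {g : ℝ → ℝ} {s : Set ℝ} {b p : ℝ} (hb : 0 ≤ b) (hp : 1 ≤ p) (hs : IsOpen s)
    (hs' : Bornology.IsBounded s) (hg : ContinuousOn g s) (hgb : ∀ x ∈ s, g x ≤ b)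
    (hv0 : ∀ x ∈ s, v (x, 0) = 0) :
    ∫ q in regionBetween 0 g s, ‖v q‖ ^ p ≤
      b ^ p * ∫ q in regionBetween 0 g s, ‖fderiv ℝ v q‖ ^ p := by
  have hp0 : 0 ≤ p := zero_le_one.trans hp
  have hsub : regionBetween 0 g s ⊆ closure s ×ˢ Icc 0 b := fun q hq =>
    ⟨subset_closure hq.1, hq.2.1.le, (hq.2.2.trans_le (hgb q.1 hq.1)).le⟩
  have hint : IntegrableOn (fun q => ‖fderiv ℝ v q‖ ^ p) (regionBetween 0 g s) :=
    (((hv.continuous_fderiv one_ne_zero).norm.rpow_const fun _ => Or.inr hp0).continuousOn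
      |>.integrableOn_compact (hs'.isCompact_closure.prod isCompact_Icc)).mono_set hsub
  refine integral_rpow_norm_le_of_lintegral_le (by positivity) hp0
    hv.continuous.aestronglyMeasurable hint ?_
  rw [← ENNReal.ofReal_rpow_of_nonneg hb hp0]
  exact lintegral_rpow_enorm_regionBetween_le hv hp hs hg hgb hv0

end

theorem stmt_10_general (L0 : ℝ) (hL0 : 1 ≤ L0) (α β : ℝ)
    (h : ℝ → ℝ)
    (hLip : ∀ x1 ∈ Set.Icc α β, ∀ x2 ∈ Set.Icc α β, |h x1 - h x2| ≤ L0 * |x1 - x2|)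
    (hhα : h α = 0)
    (r : ℝ) (hr : 0 < r) (hrβ : r < β - α)
    (p : ℝ) (hp : 1 ≤ p)
    (v : ℝ × ℝ → ℝ) (hv : ContDiff ℝ 1 v)
    (hv0 : ∀ x ∈ Set.Icc α (α + r), v (x, 0) = 0) :
    ((∫ q in {q : ℝ × ℝ | α < q.1 ∧ q.1 < α + r ∧ 0 < q.2 ∧ q.2 < h q.1}, |v q| ^ p) ≤
      (L0 * r) ^ p *
        ∫ q in {q : ℝ × ℝ | α < q.1 ∧ q.1 < α + r ∧ 0 < q.2 ∧ q.2 < h q.1},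
          ‖fderiv ℝ v q‖ ^ p) ∧
    ((∫ q in {q : ℝ × ℝ | α < q.1 ∧ q.1 < α + r ∧ 0 < q.2 ∧ q.2 < h q.1},
        |v q| ^ p) ^ (1 / p) ≤
      L0 * r *
        (∫ q in {q : ℝ × ℝ | α < q.1 ∧ q.1 < α + r ∧ 0 < q.2 ∧ q.2 < h q.1},
          ‖fderiv ℝ v q‖ ^ p) ^ (1 / p)) := by
  have hΩ : {q : ℝ × ℝ | α < q.1 ∧ q.1 < α + r ∧ 0 < q.2 ∧ q.2 < h q.1} =
      regionBetween 0 h (Ioo α (α + r)) := by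
    ext q
    simp [regionBetween, and_assoc]
  have hIoo : Ioo α (α + r) ⊆ Icc α β := fun x hx => ⟨hx.1.le, by linarith [hx.2]⟩
  have hα : α ∈ Icc α β := ⟨le_rfl, by linarith⟩
  have hcont : ContinuousOn h (Ioo α (α + r)) :=
    (LipschitzOnWith.of_dist_le_mul (K := L0.toNNReal) fun x hx y hy => by
      simpa [Real.dist_eq, max_eq_left (zero_le_one.trans hL0)] using hLip x hx y hy)
      |>.continuousOn.mono hIoo
  have hheight : ∀ x ∈ Ioo α (α + r), h x ≤ L0 * r := fun x hx =>
    calc h x ≤ |h x - h α| := by rw [hhα, sub_zero]; exact le_abs_self _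
      _ ≤ L0 * |x - α| := hLip x (hIoo hx) α hα
      _ ≤ L0 * r := by
        rw [abs_of_pos (sub_pos.2 hx.1)]
        gcongr
        linarith [hx.2]
  have hpoincare := integral_rpow_norm_regionBetween_le hv (by positivity) hp isOpen_Ioo
    (Metric.isBounded_Ioo _ _) hcont hheight fun x hx => hv0 x (Ioo_subset_Icc_self hx)
  simp only [Real.norm_eq_abs, ← hΩ] at hpoincare
  refine ⟨hpoincare, rpow_one_div_le_mul_of_le_rpow_mul ?_ ?_ (by positivity) (by positivity)
    hpoincare⟩ <;> exact integral_nonneg fun _ => by positivity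

/-- Poincaré's inequality on `Ω_h^{α,α+r}`: if `v` is `C¹` with `v(x,0) = 0` for
`x ∈ [α, α+r]`, then `∫_{Ω} |v|^p ≤ (L0 r)^p ∫_{Ω} |∇v|^p`, and in particular
`‖v‖_{L^p(Ω)} ≤ L0 r ‖∇v‖_{L^p(Ω)}`. -/
theorem stmt_10 (L0 : ℝ) (hL0 : 1 ≤ L0) (α β : ℝ) (hαβ : α < β)
    (h : ℝ → ℝ)
    (hnonneg : ∀ x ∈ Set.Icc α β, 0 ≤ h x)
    (hLip : ∀ x1 ∈ Set.Icc α β, ∀ x2 ∈ Set.Icc α β, |h x1 - h x2| ≤ L0 * |x1 - x2|)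
    (hhα : h α = 0) (hhβ : h β = 0)
    (r : ℝ) (hr : 0 < r) (hrβ : r < β - α)
    (p : ℝ) (hp : 1 ≤ p)
    (v : ℝ × ℝ → ℝ) (hv : ContDiff ℝ 1 v)
    (hv0 : ∀ x ∈ Set.Icc α (α + r), v (x, 0) = 0) :
    ((∫ q in {q : ℝ × ℝ | α < q.1 ∧ q.1 < α + r ∧ 0 < q.2 ∧ q.2 < h q.1}, |v q| ^ p) ≤
      (L0 * r) ^ p *
        ∫ q in {q : ℝ × ℝ | α < q.1 ∧ q.1 < α + r ∧ 0 < q.2 ∧ q.2 < h q.1},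
          ‖fderiv ℝ v q‖ ^ p) ∧
    ((∫ q in {q : ℝ × ℝ | α < q.1 ∧ q.1 < α + r ∧ 0 < q.2 ∧ q.2 < h q.1},
        |v q| ^ p) ^ (1 / p) ≤
      L0 * r *
        (∫ q in {q : ℝ × ℝ | α < q.1 ∧ q.1 < α + r ∧ 0 < q.2 ∧ q.2 < h q.1},
          ‖fderiv ℝ v q‖ ^ p) ^ (1 / p)) :=
  stmt_10_general L0 hL0 α β h hLip hhα r hr hrβ p hp v hv hv0
end

section
/- For every continuously differentiable function v : ℝ² → ℝ such that either v(x,0) = 0 for all x ∈ [0,r] or v(r,y) = 0 for all y ∈ [0,mr], one has ‖v‖_{L^p(A_r^m)} ≤ max{L0, 1/η0} · r · ‖∇v‖_{L^p(A_r^m)}. -/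
open MeasureTheory Set

section helper
variable {p : ℝ}

lemma contOn_rpow (p : ℝ) (hp : 1 ≤ p) : ContinuousOn (fun x : ℝ => x ^ p) (Ici 0) :=
  fun x _ => (Real.continuousAt_rpow_const x p (Or.inr (by linarith))).continuousWithinAt

lemma jensen_interval (p : ℝ) (hp : 1 ≤ p) (a b : ℝ) (hab : a < b) (g : ℝ → ℝ)
    (hg : Continuous g) (hg0 : ∀ t, 0 ≤ g t) :
    (∫ t in a..b, g t) ^ p ≤ (b - a) ^ (p - 1) * ∫ t in a..b, g t ^ p := by
  set μ := volume.restrict (Ioc a b) with hμ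
  have hμuniv : μ univ = ENNReal.ofReal (b - a) := by
    simp [hμ, Real.volume_Ioc]
  have hne : NeZero μ := by
    refine ⟨Measure.measure_univ_ne_zero.mp ?_⟩
    rw [hμuniv]
    simp only [ne_eq, ENNReal.ofReal_eq_zero, not_le]
    linarith
  have hfin : IsFiniteMeasure μ := ⟨by rw [hμuniv]; exact ENNReal.ofReal_lt_top⟩
  have hgint : Integrable g μ := hg.integrableOn_Ioc
  have hgpint : Integrable (fun t => g t ^ p) μ :=
    (hg.rpow_const (fun t => Or.inr (by linarith))).integrableOn_Ioc
  have hjen := (convexOn_rpow hp).map_average_le (contOn_rpow p hp) isClosed_Ici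
    (Filter.Eventually.of_forall fun t => hg0 t) hgint hgpint
  rw [average_eq, average_eq] at hjen
  have htr : (μ univ).toReal = b - a := by
    rw [hμuniv, ENNReal.toReal_ofReal (by linarith)]
  rw [show μ.real univ = b - a from htr] at hjen
  have hI : ∫ t in a..b, g t = ∫ t, g t ∂μ := intervalIntegral.integral_of_le hab.le
  have hJ : ∫ t in a..b, g t ^ p = ∫ t, g t ^ p ∂μ := intervalIntegral.integral_of_le hab.le
  rw [hI, hJ]
  set I := ∫ t, g t ∂μ with hIdef
  set J := ∫ t, g t ^ p ∂μ with hJdef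
  have hInn : 0 ≤ I := integral_nonneg hg0
  have hJnn : 0 ≤ J := integral_nonneg fun t => Real.rpow_nonneg (hg0 t) p
  have hba : (0:ℝ) < b - a := by linarith
  have key : ((b - a)⁻¹ * I) ^ p ≤ (b - a)⁻¹ * J := by simpa [smul_eq_mul] using hjen
  have : I ^ p = (b - a) ^ p * ((b - a)⁻¹ * I) ^ p := by
    rw [← Real.mul_rpow hba.le (by positivity)]
    congr 1
    field_simp
  rw [this]
  calc (b - a) ^ p * ((b - a)⁻¹ * I) ^ p ≤ (b - a) ^ p * ((b - a)⁻¹ * J) :=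
        mul_le_mul_of_nonneg_left key (Real.rpow_nonneg hba.le p)
    _ = (b - a) ^ (p - 1) * J := by
        rw [Real.rpow_sub hba, Real.rpow_one]
        ring

lemma line_est (p : ℝ) (hp : 1 ≤ p) (a b : ℝ) (hab : a < b) (f g : ℝ → ℝ)
    (hd : ∀ t, HasDerivAt f (g t) t) (hg : Continuous g)
    (h0 : f a = 0 ∨ f b = 0) :
    ∫ y in a..b, |f y| ^ p ≤ (b - a) ^ p * ∫ t in a..b, |g t| ^ p := by
  have hfc : Continuous f := by
    rw [continuous_iff_continuousAt]
    exact fun t => (hd t).differentiableAt.continuousAt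
  set B := ∫ t in a..b, |g t| with hB
  have hgi : ∀ c d : ℝ, IntervalIntegrable g volume c d := fun c d => hg.intervalIntegrable c d
  have hgai : IntervalIntegrable (fun t => |g t|) volume a b := hg.abs.intervalIntegrable a b
  have claim : ∀ y ∈ Icc a b, |f y| ≤ B := by
    intro y hy
    rcases h0 with h0 | h0
    · have hfy : ∫ t in a..y, g t = f y - f a :=
        intervalIntegral.integral_eq_sub_of_hasDerivAt (fun t _ => hd t) (hgi a y)
      have : |f y| = |∫ t in a..y, g t| := by rw [hfy, h0, sub_zero]
      rw [this]
      calc |∫ t in a..y, g t| ≤ ∫ t in a..y, |g t| :=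
            intervalIntegral.abs_integral_le_integral_abs hy.1
        _ ≤ B := intervalIntegral.integral_mono_interval le_rfl hy.1 hy.2
            (Filter.Eventually.of_forall fun t => abs_nonneg _) hgai
    · have hfy : ∫ t in y..b, g t = f b - f y :=
        intervalIntegral.integral_eq_sub_of_hasDerivAt (fun t _ => hd t) (hgi y b)
      have : |f y| = |∫ t in y..b, g t| := by rw [hfy, h0, zero_sub, abs_neg]
      rw [this]
      calc |∫ t in y..b, g t| ≤ ∫ t in y..b, |g t| :=
            intervalIntegral.abs_integral_le_integral_abs hy.2
        _ ≤ B := intervalIntegral.integral_mono_interval hy.1 hy.2 le_rfl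
            (Filter.Eventually.of_forall fun t => abs_nonneg _) hgai
  have hBnn : 0 ≤ B := intervalIntegral.integral_nonneg hab.le fun t _ => abs_nonneg _
  have step1 : ∫ y in a..b, |f y| ^ p ≤ (b - a) * B ^ p := by
    have hmono : ∫ y in a..b, |f y| ^ p ≤ ∫ _ in a..b, B ^ p := by
      refine intervalIntegral.integral_mono_on hab.le ?_ (intervalIntegrable_const) ?_
      · exact ((hfc.abs.rpow_const fun t => Or.inr (by linarith)).intervalIntegrable a b)
      · exact fun y hy => Real.rpow_le_rpow (abs_nonneg _) (claim y hy) (by linarith)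
    simpa [smul_eq_mul] using hmono
  have step2 : B ^ p ≤ (b - a) ^ (p - 1) * ∫ t in a..b, |g t| ^ p :=
    jensen_interval p hp a b hab (fun t => |g t|) hg.abs (fun t => abs_nonneg _)
  have hba : (0:ℝ) < b - a := by linarith
  calc ∫ y in a..b, |f y| ^ p ≤ (b - a) * B ^ p := step1
    _ ≤ (b - a) * ((b - a) ^ (p - 1) * ∫ t in a..b, |g t| ^ p) :=
        mul_le_mul_of_nonneg_left step2 hba.le
    _ = (b - a) ^ p * ∫ t in a..b, |g t| ^ p := by
        rw [← mul_assoc]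
        congr 1
        rw [← Real.rpow_one_add' hba.le (by intro h; linarith [h])]
        ring_nf

end helper

/-- Poincaré's inequality on the triangle `A_r^m = {(x,y) : 0 < x < r, 0 < y < m x}`:
if `v` is `C¹` and vanishes either on the bottom side or on the vertical side, then
`‖v‖_{L^p(A_r^m)} ≤ max{L0, 1/η0} · r · ‖∇v‖_{L^p(A_r^m)}`. -/
theorem stmt_11 (L0 η0 : ℝ) (hL0 : 1 ≤ L0) (hη0 : 0 < η0) (hη0' : η0 < 1)
    (m : ℝ) (hm1 : η0 ≤ m) (hm2 : m ≤ L0)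
    (r : ℝ) (hr : 0 < r)
    (p : ℝ) (hp : 1 ≤ p)
    (v : ℝ × ℝ → ℝ) (hv : ContDiff ℝ 1 v)
    (hv0 : (∀ x ∈ Set.Icc (0:ℝ) r, v (x, 0) = 0) ∨
           (∀ y ∈ Set.Icc (0:ℝ) (m * r), v (r, y) = 0)) :
    (∫ q in {q : ℝ × ℝ | 0 < q.1 ∧ q.1 < r ∧ 0 < q.2 ∧ q.2 < m * q.1},
        |v q| ^ p) ^ (1 / p) ≤
      max L0 (1 / η0) * r *
        (∫ q in {q : ℝ × ℝ | 0 < q.1 ∧ q.1 < r ∧ 0 < q.2 ∧ q.2 < m * q.1},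
          ‖fderiv ℝ v q‖ ^ p) ^ (1 / p) := by
  have hm : 0 < m := lt_of_lt_of_le hη0 hm1
  set A : Set (ℝ × ℝ) := {q : ℝ × ℝ | 0 < q.1 ∧ q.1 < r ∧ 0 < q.2 ∧ q.2 < m * q.1} with hA
  set C : ℝ := max L0 (1 / η0) * r with hC
  have hmax1 : (1:ℝ) ≤ max L0 (1/η0) := le_trans hL0 (le_max_left _ _)
  have hC1 : r ≤ C := by nlinarith
  have hC2 : L0 * r ≤ C := mul_le_mul_of_nonneg_right (le_max_left _ _) hr.le
  have hCpos : 0 < C := lt_of_lt_of_le hr hC1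
  have hvd : Differentiable ℝ v := hv.differentiable one_ne_zero
  have hDc : Continuous (fderiv ℝ v) := hv.continuous_fderiv one_ne_zero
  have hppos : 0 < p := lt_of_lt_of_le one_pos hp
  set f1 : ℝ × ℝ → ℝ := fun q => |v q| ^ p with hf1
  set f2 : ℝ × ℝ → ℝ := fun q => ‖fderiv ℝ v q‖ ^ p with hf2
  have hf1c : Continuous f1 := hv.continuous.abs.rpow_const fun q => Or.inr hppos.le
  have hf2c : Continuous f2 := hDc.norm.rpow_const fun q => Or.inr hppos.le
  have hf2nn : ∀ q, 0 ≤ f2 q := fun q => Real.rpow_nonneg (norm_nonneg _) p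
  have hf1nn : ∀ q, 0 ≤ f1 q := fun q => Real.rpow_nonneg (abs_nonneg _) p
  have hAopen : IsOpen A := by
    have : A = ({q : ℝ × ℝ | 0 < q.1} ∩ {q | q.1 < r}) ∩
        ({q | 0 < q.2} ∩ {q | q.2 < m * q.1}) := by
      ext q; simp [hA, and_assoc]
    rw [this]
    exact (((isOpen_lt continuous_const continuous_fst).inter
      (isOpen_lt continuous_fst continuous_const)).inter
      ((isOpen_lt continuous_const continuous_snd).inter
      (isOpen_lt continuous_snd (continuous_const.mul continuous_fst))))
  have hAm : MeasurableSet A := hAopen.measurableSet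
  have hAsub : A ⊆ Icc ((0:ℝ), (0:ℝ)) (r, m * r) := by
    rintro ⟨x, y⟩ ⟨h1, h2, h3, h4⟩
    simp only [Set.mem_Icc, Prod.le_def]
    refine ⟨⟨h1.le, h3.le⟩, ⟨h2.le, ?_⟩⟩
    nlinarith
  have hint : ∀ h : ℝ × ℝ → ℝ, Continuous h → Integrable (A.indicator h) volume := by
    intro h hc
    rw [integrable_indicator_iff hAm]
    exact (hc.continuousOn.integrableOn_compact' isCompact_Icc measurableSet_Icc).mono_set hAsub
  have hi1 := hint f1 hf1c
  have hi2 := hint f2 hf2c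
  have hvol : (volume : Measure (ℝ × ℝ)) = (volume : Measure ℝ).prod volume :=
    Measure.volume_eq_prod ℝ ℝ
  have hi1' : Integrable (A.indicator f1) ((volume : Measure ℝ).prod volume) := by rwa [← hvol]
  have hi2' : Integrable (A.indicator f2) ((volume : Measure ℝ).prod volume) := by rwa [← hvol]
  have key : ∫ q in A, f1 q ≤ C ^ p * ∫ q in A, f2 q := by
    rw [← integral_indicator hAm, ← integral_indicator hAm, hvol]
    rcases hv0 with hz | hz
    · -- vanishing on the bottom side: integrate in y along vertical segments
      rw [integral_prod _ hi1', integral_prod _ hi2', ← integral_const_mul]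
      refine integral_mono hi1'.integral_prod_left (hi2'.integral_prod_left.const_mul _) ?_
      intro x
      dsimp only
      by_cases hx : x ∈ Ioo (0:ℝ) r
      · have hsec : ∀ (h : ℝ × ℝ → ℝ) (y : ℝ),
            A.indicator h (x, y) = (Ioo (0:ℝ) (m * x)).indicator (fun y => h (x, y)) y := by
          intro h y
          by_cases hy : y ∈ Ioo (0:ℝ) (m * x)
          · rw [indicator_of_mem hy, indicator_of_mem]
            exact ⟨hx.1, hx.2, hy.1, hy.2⟩
          · rw [indicator_of_notMem hy, indicator_of_notMem]
            intro hq; exact hy ⟨hq.2.2.1, hq.2.2.2⟩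
        have hmx : (0:ℝ) < m * x := by nlinarith [hx.1]
        have e : ∀ (h : ℝ × ℝ → ℝ),
            (∫ y, A.indicator h (x, y)) = ∫ y in (0:ℝ)..(m * x), h (x, y) := by
          intro h
          simp_rw [hsec h]
          rw [integral_indicator measurableSet_Ioo,
            intervalIntegral.integral_of_le hmx.le, integral_Ioc_eq_integral_Ioo]
        rw [e f1, e f2]
        set g : ℝ → ℝ := fun t => fderiv ℝ v (x, t) (0, 1) with hg
        have hd : ∀ t, HasDerivAt (fun s => v (x, s)) (g t) t := by
          intro t
          have h1 : HasDerivAt (fun s : ℝ => (x, s)) ((0:ℝ), (1:ℝ)) t :=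
            (hasDerivAt_const t x).prodMk (hasDerivAt_id t)
          exact ((hvd (x, t)).hasFDerivAt).comp_hasDerivAt t h1
        have hgc : Continuous g :=
          (hDc.comp (continuous_const.prodMk continuous_id)).clm_apply continuous_const
        have h0 : v (x, 0) = 0 := hz x ⟨hx.1.le, hx.2.le⟩
        have L := line_est p hp 0 (m * x) hmx (fun s => v (x, s)) g hd hgc (Or.inl h0)
        have L2 : ∫ t in (0:ℝ)..(m * x), |g t| ^ p ≤ ∫ y in (0:ℝ)..(m * x), f2 (x, y) := by
          refine intervalIntegral.integral_mono_on hmx.le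
            ((hgc.abs.rpow_const fun t => Or.inr hppos.le).intervalIntegrable _ _)
            ((hf2c.comp (continuous_const.prodMk continuous_id)).intervalIntegrable _ _) ?_
          intro t _
          refine Real.rpow_le_rpow (abs_nonneg _) ?_ hppos.le
          calc |g t| ≤ ‖fderiv ℝ v (x, t)‖ * ‖((0:ℝ), (1:ℝ))‖ :=
                (fderiv ℝ v (x, t)).le_opNorm _
            _ = ‖fderiv ℝ v (x, t)‖ := by simp [Prod.norm_def]
        have hcb : (m * x - 0) ^ p ≤ C ^ p := by
          rw [sub_zero]
          refine Real.rpow_le_rpow (by positivity) ?_ hppos.le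
          nlinarith [hx.2]
        calc ∫ y in (0:ℝ)..(m * x), f1 (x, y)
            ≤ (m * x - 0) ^ p * ∫ t in (0:ℝ)..(m * x), |g t| ^ p := L
          _ ≤ C ^ p * ∫ y in (0:ℝ)..(m * x), f2 (x, y) := by
              refine mul_le_mul hcb L2 ?_ (by positivity)
              exact intervalIntegral.integral_nonneg hmx.le
                fun t _ => Real.rpow_nonneg (abs_nonneg _) _
      · have hsec : ∀ (h : ℝ × ℝ → ℝ) (y : ℝ), A.indicator h (x, y) = 0 := by
          intro h y
          apply indicator_of_notMem
          intro hq; exact hx ⟨hq.1, hq.2.1⟩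
        simp only [hsec]
        simp
    · -- vanishing on the right side: integrate in x along horizontal segments
      rw [integral_prod_symm _ hi1', integral_prod_symm _ hi2', ← integral_const_mul]
      refine integral_mono hi1'.integral_prod_right (hi2'.integral_prod_right.const_mul _) ?_
      intro y
      dsimp only
      by_cases hy : y ∈ Ioo (0:ℝ) (m * r)
      · have hym : 0 < y / m := div_pos hy.1 hm
        have hyr : y / m < r := (div_lt_iff₀ hm).mpr (by nlinarith [hy.2])
        have hsec : ∀ (h : ℝ × ℝ → ℝ) (x : ℝ),
            A.indicator h (x, y) = (Ioo (y / m) r).indicator (fun x => h (x, y)) x := by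
          intro h x
          by_cases hx : x ∈ Ioo (y / m) r
          · rw [indicator_of_mem hx, indicator_of_mem]
            have hyx : y < m * x := by
              have := (div_lt_iff₀ hm).mp hx.1
              nlinarith
            exact ⟨lt_trans hym hx.1, hx.2, hy.1, hyx⟩
          · rw [indicator_of_notMem hx, indicator_of_notMem]
            intro hq
            exact hx ⟨(div_lt_iff₀ hm).mpr (by nlinarith [hq.2.2.2]), hq.2.1⟩
        have e : ∀ (h : ℝ × ℝ → ℝ),
            (∫ x, A.indicator h (x, y)) = ∫ x in (y / m)..r, h (x, y) := by
          intro h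
          simp_rw [hsec h]
          rw [integral_indicator measurableSet_Ioo,
            intervalIntegral.integral_of_le hyr.le, integral_Ioc_eq_integral_Ioo]
        rw [e f1, e f2]
        set g : ℝ → ℝ := fun t => fderiv ℝ v (t, y) (1, 0) with hg
        have hd : ∀ t, HasDerivAt (fun s => v (s, y)) (g t) t := by
          intro t
          have h1 : HasDerivAt (fun s : ℝ => (s, y)) ((1:ℝ), (0:ℝ)) t :=
            (hasDerivAt_id t).prodMk (hasDerivAt_const t y)
          exact ((hvd (t, y)).hasFDerivAt).comp_hasDerivAt t h1
        have hgc : Continuous g :=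
          (hDc.comp (continuous_id.prodMk continuous_const)).clm_apply continuous_const
        have h0 : v (r, y) = 0 := hz y ⟨hy.1.le, hy.2.le⟩
        have L := line_est p hp (y / m) r hyr (fun s => v (s, y)) g hd hgc (Or.inr h0)
        have L2 : ∫ t in (y / m)..r, |g t| ^ p ≤ ∫ x in (y / m)..r, f2 (x, y) := by
          refine intervalIntegral.integral_mono_on hyr.le
            ((hgc.abs.rpow_const fun t => Or.inr hppos.le).intervalIntegrable _ _)
            ((hf2c.comp (continuous_id.prodMk continuous_const)).intervalIntegrable _ _) ?_
          intro t _
          refine Real.rpow_le_rpow (abs_nonneg _) ?_ hppos.le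
          calc |g t| ≤ ‖fderiv ℝ v (t, y)‖ * ‖((1:ℝ), (0:ℝ))‖ :=
                (fderiv ℝ v (t, y)).le_opNorm _
            _ = ‖fderiv ℝ v (t, y)‖ := by simp [Prod.norm_def]
        have hcb : (r - y / m) ^ p ≤ C ^ p := by
          refine Real.rpow_le_rpow (by linarith) (by linarith [hym.le, hC1]) hppos.le
        calc ∫ x in (y / m)..r, f1 (x, y)
            ≤ (r - y / m) ^ p * ∫ t in (y / m)..r, |g t| ^ p := L
          _ ≤ C ^ p * ∫ x in (y / m)..r, f2 (x, y) := by
              refine mul_le_mul hcb L2 ?_ (by positivity)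
              exact intervalIntegral.integral_nonneg hyr.le
                fun t _ => Real.rpow_nonneg (abs_nonneg _) _
      · have hsec : ∀ (h : ℝ × ℝ → ℝ) (x : ℝ), A.indicator h (x, y) = 0 := by
          intro h x
          apply indicator_of_notMem
          intro hq
          refine hy ⟨hq.2.2.1, ?_⟩
          nlinarith [hq.2.2.2, hq.2.1]
        simp only [hsec]
        simp
  have hG : 0 ≤ ∫ q in A, f2 q := setIntegral_nonneg hAm fun q _ => hf2nn q
  have hF : 0 ≤ ∫ q in A, f1 q := setIntegral_nonneg hAm fun q _ => hf1nn q
  calc (∫ q in A, f1 q) ^ (1 / p)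
      ≤ (C ^ p * ∫ q in A, f2 q) ^ (1 / p) :=
        Real.rpow_le_rpow hF key (by positivity)
    _ = C * (∫ q in A, f2 q) ^ (1 / p) := by
        rw [Real.mul_rpow (Real.rpow_nonneg hCpos.le p) hG, ← Real.rpow_mul hCpos.le]
        congr 2
        field_simp
        exact Real.rpow_one C
    _ = max L0 (1 / η0) * r * (∫ q in A, f2 q) ^ (1 / p) := by rw [hC]
end

section
/- If f_k → f uniformly on [a,b], then f is continuously differentiable on [a,b] and f_k' → f' uniformly on [a,b]. -/
/-!
The uniform `L²` bound on `f_k''` makes the derivatives `f_k'` equicontinuous: by AM-GM,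
`|∫_x^y φ| ≤ t|y - x|/2 + M/(2t)` for every `t > 0`, so `|f_k' x - f_k' y| ≤ ε` once
`|x - y| ≤ ε²/M`. For `g = f_k - f_j`, the mean value theorem on an interval of length `h`
containing `x` gives a point where `|g'| ≤ 2‖g‖∞/h`, and equicontinuity transfers this to `x`
up to `ε`; hence `(f_k')` is uniformly Cauchy. Its uniform limit `f'` is continuous, and
passing to the limit in `f_k x = f_k a + ∫_a^x f_k'` gives `f x = f a + ∫_a^x f'`.
-/

open MeasureTheory Set Filter Topology

section Icc

variable {a b : ℝ}

lemma abs_le_half_add_sq_div (t u : ℝ) (ht : 0 < t) : |u| ≤ t / 2 + |u| ^ 2 / (2 * t) := by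
  have key : t / 2 + |u| ^ 2 / (2 * t) - |u| = (|u| - t) ^ 2 / (2 * t) := by
    field_simp
    ring
  have : 0 ≤ (|u| - t) ^ 2 / (2 * t) := by positivity
  linarith

lemma abs_intervalIntegral_le_of_integral_sq_le_s14 {φ : ℝ → ℝ} {M t x y : ℝ}
    (hφ : IntervalIntegrable φ volume a b)
    (hφ2 : IntervalIntegrable (fun s => |φ s| ^ 2) volume a b)
    (hM : ∫ s in a..b, |φ s| ^ 2 ≤ M) (hx : x ∈ Icc a b) (hy : y ∈ Icc a b) (ht : 0 < t) :
    |∫ s in x..y, φ s| ≤ t / 2 * |y - x| + M / (2 * t) := by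
  wlog hxy : x ≤ y generalizing x y
  · rw [intervalIntegral.integral_symm, abs_neg, abs_sub_comm]
    exact this hy hx (le_of_not_ge hxy)
  have hsub : uIcc x y ⊆ uIcc a b := uIcc_subset_uIcc (Icc_subset_uIcc hx) (Icc_subset_uIcc hy)
  have hφ2xy : IntervalIntegrable (fun s => |φ s| ^ 2) volume x y := hφ2.mono_set hsub
  have hsq : ∫ s in x..y, |φ s| ^ 2 ≤ M :=
    (intervalIntegral.integral_mono_interval hx.1 hxy hy.2
      (.of_forall fun s => by positivity) hφ2).trans hM
  calc |∫ s in x..y, φ s|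
      ≤ ∫ s in x..y, |φ s| := intervalIntegral.abs_integral_le_integral_abs hxy
    _ ≤ ∫ s in x..y, (t / 2 + |φ s| ^ 2 / (2 * t)) :=
        intervalIntegral.integral_mono_on hxy (hφ.mono_set hsub).abs
          (intervalIntegrable_const.add (hφ2xy.div_const _))
          fun s _ => abs_le_half_add_sq_div t (φ s) ht
    _ = t / 2 * |y - x| + (∫ s in x..y, |φ s| ^ 2) / (2 * t) := by
        rw [intervalIntegral.integral_add intervalIntegrable_const (hφ2xy.div_const _),
          intervalIntegral.integral_const, intervalIntegral.integral_div, smul_eq_mul,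
          abs_of_nonneg (sub_nonneg.2 hxy), mul_comm]
    _ ≤ t / 2 * |y - x| + M / (2 * t) := by gcongr

lemma sub_eq_intervalIntegral_of_eq_add_integral {g g'' : ℝ → ℝ} {x y : ℝ}
    (hg : ∀ x ∈ Icc a b, g x = g a + ∫ s in a..x, g'' s)
    (hg'' : IntervalIntegrable g'' volume a b) (hx : x ∈ Icc a b) (hy : y ∈ Icc a b) :
    g y - g x = ∫ s in x..y, g'' s := by
  have hint : ∀ z ∈ Icc a b, IntervalIntegrable g'' volume a z := fun z hz =>
    hg''.mono_set (uIcc_subset_uIcc left_mem_uIcc (Icc_subset_uIcc hz))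
  rw [hg y hy, hg x hx, ← intervalIntegral.integral_interval_sub_left (hint y hy) (hint x hx)]
  ring

lemma abs_sub_le_of_eq_add_integral_of_integral_sq_le {g g'' : ℝ → ℝ} {M ε x y : ℝ}
    (hM : 0 < M) (hε : 0 < ε) (hg : ∀ x ∈ Icc a b, g x = g a + ∫ s in a..x, g'' s)
    (hg'' : IntervalIntegrable g'' volume a b)
    (hg''2 : IntervalIntegrable (fun s => |g'' s| ^ 2) volume a b)
    (hL2 : ∫ s in a..b, |g'' s| ^ 2 ≤ M) (hx : x ∈ Icc a b) (hy : y ∈ Icc a b)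
    (hxy : |x - y| ≤ ε ^ 2 / M) : |g x - g y| ≤ ε := by
  rw [sub_eq_intervalIntegral_of_eq_add_integral hg hg'' hy hx]
  calc |∫ s in y..x, g'' s|
      ≤ M / ε / 2 * |x - y| + M / (2 * (M / ε)) :=
        abs_intervalIntegral_le_of_integral_sq_le_s14 hg'' hg''2 hL2 hy hx (by positivity)
    _ ≤ M / ε / 2 * (ε ^ 2 / M) + M / (2 * (M / ε)) := by gcongr
    _ = ε := by field_simp; ring

lemma exists_Icc_add_subset_of_mem {x h : ℝ} (hx : x ∈ Icc a b) (hh : 0 ≤ h)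
    (hhb : h ≤ b - a) : ∃ c, a ≤ c ∧ c + h ≤ b ∧ x ∈ Icc c (c + h) := by
  refine ⟨min x (b - h), le_min hx.1 (by linarith), by linarith [min_le_right x (b - h)],
    min_le_left _ _, ?_⟩
  rcases le_total x (b - h) with hxh | hxh
  · rw [min_eq_left hxh]; linarith
  · rw [min_eq_right hxh]; linarith [hx.2]

lemma abs_deriv_le_of_abs_le_of_oscillation_le {g g' : ℝ → ℝ} {δ η h : ℝ}
    (hg : ∀ x ∈ Icc a b, HasDerivWithinAt g (g' x) (Icc a b) x)
    (hδ : ∀ x ∈ Icc a b, |g x| ≤ δ) (hh : 0 < h) (hhb : h ≤ b - a)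
    (hη : ∀ x ∈ Icc a b, ∀ y ∈ Icc a b, |x - y| ≤ h → |g' x - g' y| ≤ η)
    {x : ℝ} (hx : x ∈ Icc a b) : |g' x| ≤ 2 * δ / h + η := by
  obtain ⟨c, hac, hcb, hxc⟩ := exists_Icc_add_subset_of_mem hx hh.le hhb
  have hsub : Icc c (c + h) ⊆ Icc a b := Icc_subset_Icc hac hcb
  obtain ⟨ξ, hξ, hslope⟩ := exists_hasDerivAt_eq_slope g g' (by linarith : c < c + h)
    (fun z hz => (hg z (hsub hz)).continuousWithinAt.mono hsub)
    (fun z hz => (hg z (hsub (Ioo_subset_Icc_self hz))).hasDerivAt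
      (Icc_mem_nhds (by linarith [hz.1]) (by linarith [hz.2])))
  have hcmem : c ∈ Icc a b := hsub (left_mem_Icc.2 (by linarith))
  have hdmem : c + h ∈ Icc a b := hsub (right_mem_Icc.2 (by linarith))
  have hξslope : |g' ξ| ≤ 2 * δ / h := by
    rw [hslope, add_sub_cancel_left, abs_div, abs_of_pos hh]
    gcongr
    linarith [abs_sub (g (c + h)) (g c), hδ _ hcmem, hδ _ hdmem]
  have hξx : |g' x - g' ξ| ≤ η :=
    hη x hx ξ (hsub (Ioo_subset_Icc_self hξ))
      (abs_sub_le_iff.2 ⟨by linarith [hxc.2, hξ.1], by linarith [hxc.1, hξ.2]⟩)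
  calc |g' x| ≤ |g' ξ| + |g' x - g' ξ| := by
        simpa using abs_add_le (g' ξ) (g' x - g' ξ)
    _ ≤ 2 * δ / h + η := add_le_add hξslope hξx

lemma uniformCauchySeqOn_deriv_of_equicontinuous {ι : Type*} [Nonempty ι] [SemilatticeSup ι]
    {F F' : ι → ℝ → ℝ} (hab : a < b)
    (hF : ∀ i, ∀ x ∈ Icc a b, HasDerivWithinAt (F i) (F' i x) (Icc a b) x)
    (hcauchy : UniformCauchySeqOn F atTop (Icc a b))
    (hequi : ∀ ε > 0, ∃ h > 0, ∀ i, ∀ x ∈ Icc a b, ∀ y ∈ Icc a b,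
      |x - y| ≤ h → |F' i x - F' i y| ≤ ε) :
    UniformCauchySeqOn F' atTop (Icc a b) := by
  rw [Metric.uniformCauchySeqOn_iff] at hcauchy ⊢
  intro ε hε
  obtain ⟨h₀, hh₀, hosc⟩ := hequi (ε / 4) (by positivity)
  set h := min h₀ (b - a)
  have hh : 0 < h := lt_min hh₀ (by linarith)
  obtain ⟨N, hN⟩ := hcauchy (ε * h / 8) (by positivity)
  refine ⟨N, fun m hm n hn x hx => ?_⟩
  have hdiff : |F' m x - F' n x| ≤ 2 * (ε * h / 8) / h + ε / 2 :=
    abs_deriv_le_of_abs_le_of_oscillation_le (g' := fun y => F' m y - F' n y)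
      (fun y hy => (hF m y hy).sub (hF n y hy))
      (fun y hy => (hN m hm n hn y hy).le) hh (min_le_right _ _)
      (fun y hy z hz hyz => by
        have := hosc m y hy z hz (hyz.trans (min_le_left _ _))
        have := hosc n y hy z hz (hyz.trans (min_le_left _ _))
        rw [sub_sub_sub_comm]
        linarith [abs_sub (F' m y - F' m z) (F' n y - F' n z)])
      hx
  have h2δ : 2 * (ε * h / 8) / h = ε / 4 := by field_simp; ring
  rw [Real.dist_eq]
  linarith

lemma integral_eq_sub_of_hasDerivWithinAt_Icc_s14 {F F' : ℝ → ℝ}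
    (hF : ∀ x ∈ Icc a b, HasDerivWithinAt F (F' x) (Icc a b) x)
    (hF' : ContinuousOn F' (Icc a b)) {x : ℝ} (hx : x ∈ Icc a b) :
    ∫ s in a..x, F' s = F x - F a := by
  have hsub : Icc a x ⊆ Icc a b := Icc_subset_Icc_right hx.2
  refine intervalIntegral.integral_eq_sub_of_hasDerivAt_of_le hx.1
    (fun z hz => (hF z (hsub hz)).continuousWithinAt.mono hsub) (fun z hz => ?_)
    ((hF'.mono (uIcc_of_le hx.1 ▸ hsub)).intervalIntegrable)
  exact (hF z (hsub (Ioo_subset_Icc_self hz))).hasDerivAt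
    (Icc_mem_nhds hz.1 (hz.2.trans_le hx.2))

lemma hasDerivWithinAt_integral_Icc {g : ℝ → ℝ} (hg : ContinuousOn g (Icc a b)) {x : ℝ}
    (hx : x ∈ Icc a b) :
    HasDerivWithinAt (fun u => ∫ s in a..u, g s) (g x) (Icc a b) x := by
  have : Fact (x ∈ Icc a b) := ⟨hx⟩
  exact intervalIntegral.integral_hasDerivWithinAt_right
    (hg.mono (uIcc_subset_Icc (left_mem_Icc.2 (hx.1.trans hx.2)) hx)).intervalIntegrable
    (hg.stronglyMeasurableAtFilter_nhdsWithin measurableSet_Icc x) (hg x hx)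

lemma hasDerivWithinAt_Icc_of_tendstoUniformlyOn {ι : Type*} {l : Filter ι} [l.NeBot]
    [l.IsCountablyGenerated] {F F' : ι → ℝ → ℝ} {f g : ℝ → ℝ}
    (hF : ∀ i, ∀ x ∈ Icc a b, HasDerivWithinAt (F i) (F' i x) (Icc a b) x)
    (hF' : ∀ i, ContinuousOn (F' i) (Icc a b))
    (hFf : ∀ x ∈ Icc a b, Tendsto (fun i => F i x) l (𝓝 (f x)))
    (hF'g : TendstoUniformlyOn F' g l (Icc a b)) {x : ℝ} (hx : x ∈ Icc a b) :
    HasDerivWithinAt f (g x) (Icc a b) x := by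
  have hg : ContinuousOn g (Icc a b) := hF'g.continuousOn (.of_forall hF')
  have ha : a ∈ Icc a b := left_mem_Icc.2 (hx.1.trans hx.2)
  have hf : ∀ y ∈ Icc a b, f y = f a + ∫ s in a..y, g s := by
    intro y hy
    have hsub : uIcc a y ⊆ Icc a b := uIcc_subset_Icc ha hy
    have hint : Tendsto (fun i => ∫ s in a..y, F' i s) l (𝓝 (∫ s in a..y, g s)) :=
      (hF'g.mono hsub).tendsto_intervalIntegral_of_continuousOn
        (.of_forall fun i => (hF' i).mono hsub)
    refine tendsto_nhds_unique (hFf y hy) ?_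
    convert (hFf a ha).add hint using 2 with i
    rw [integral_eq_sub_of_hasDerivWithinAt_Icc_s14 (hF i) (hF' i) hy]
    ring
  exact ((hasDerivWithinAt_integral_Icc hg hx).const_add (f a)).congr hf (hf x hx)

end Icc

lemma UniformCauchySeqOn.exists_tendstoUniformlyOn {ι α β : Type*} [Nonempty ι]
    [SemilatticeSup ι] [UniformSpace β] [CompleteSpace β] [Nonempty β] {F : ι → α → β}
    {s : Set α} (hF : UniformCauchySeqOn F atTop s) :
    ∃ f : α → β, TendstoUniformlyOn F f atTop s :=
  ⟨fun x => limUnder atTop fun i => F i x,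
    hF.tendstoUniformlyOn_of_tendsto fun _ hx => (hF.cauchySeq hx).tendsto_limUnder⟩

/-- If `f_k : [a,b] → ℝ` are `C¹` with absolutely continuous derivatives whose second
derivatives satisfy a uniform `L²` bound `∫_a^b |f_k''|² ≤ M`, and `f_k → f` uniformly on
`[a,b]`, then `f` is continuously differentiable on `[a,b]` and `f_k' → f'` uniformly on
`[a,b]`. -/
theorem stmt_14 (a b M : ℝ) (hab : a < b) (hM : 0 < M)
    (f : ℝ → ℝ) (fk fk' fk'' : ℕ → ℝ → ℝ)
    (hderiv : ∀ k : ℕ, ∀ x ∈ Set.Icc a b,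
      HasDerivWithinAt (fk k) (fk' k x) (Set.Icc a b) x)
    (hcont : ∀ k : ℕ, ContinuousOn (fk' k) (Set.Icc a b))
    (hAC : ∀ k : ℕ, ∀ x ∈ Set.Icc a b, fk' k x = fk' k a + ∫ s in a..x, fk'' k s)
    (hint : ∀ k : ℕ, IntervalIntegrable (fk'' k) volume a b)
    (hintsq : ∀ k : ℕ, IntervalIntegrable (fun x => |fk'' k x| ^ 2) volume a b)
    (hL2 : ∀ k : ℕ, (∫ x in a..b, |fk'' k x| ^ 2) ≤ M)
    (hunif : TendstoUniformlyOn (fun k x => fk k x) f atTop (Set.Icc a b)) :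
    ∃ f' : ℝ → ℝ,
      ContinuousOn f' (Set.Icc a b) ∧
      (∀ x ∈ Set.Icc a b, HasDerivWithinAt f (f' x) (Set.Icc a b) x) ∧
      TendstoUniformlyOn (fun k x => fk' k x) f' atTop (Set.Icc a b) := by
  have hequi : ∀ ε > 0, ∃ h > 0, ∀ k, ∀ x ∈ Icc a b, ∀ y ∈ Icc a b,
      |x - y| ≤ h → |fk' k x - fk' k y| ≤ ε := fun ε hε =>
    ⟨ε ^ 2 / M, by positivity, fun k _ hx _ hy =>
      abs_sub_le_of_eq_add_integral_of_integral_sq_le hM hε (hAC k) (hint k) (hintsq k)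
        (hL2 k) hx hy⟩
  obtain ⟨f', hf'⟩ := (uniformCauchySeqOn_deriv_of_equicontinuous hab hderiv
    hunif.uniformCauchySeqOn hequi).exists_tendstoUniformlyOn
  exact ⟨f', hf'.continuousOn (.of_forall hcont), fun x hx =>
    hasDerivWithinAt_Icc_of_tendstoUniformlyOn hderiv hcont (fun y hy => hunif.tendsto_at hy)
      hf' hx, hf'⟩
end

section
/- Under the stated hypotheses, the map t ↦ h*(t,·) is continuous from [0,∞) into C_b(ℝ), the space of bounded continuous functions on ℝ endowed with the supremum norm. -/
/-!
A `K`-Lipschitz function `g` with `|g x₀| = M` stays above `M / 2` in absolute value on an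
interval of length `M / K` around `x₀`, so `M ^ 3 ≤ 4 K ∫ g²`. Hence, for uniformly Lipschitz
functions, smallness in `L²` forces uniform smallness. The differences `h*(t,·) - h*(t₀,·)` are
`2 L0`-Lipschitz with compact support, so this converts `L²`-continuity into sup-norm continuity.
-/

open MeasureTheory Set
open scoped NNReal

theorem LipschitzWith.abs_pow_three_le_integral_sq {K : ℝ≥0} (hK : 0 < K) {g : ℝ → ℝ}
    (hg : LipschitzWith K g) (hint : Integrable fun x ↦ g x ^ 2) (x₀ : ℝ) :
    |g x₀| ^ 3 ≤ 4 * (K : ℝ) * ∫ x, g x ^ 2 := by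
  have hK' : (0 : ℝ) < K := hK
  set r := |g x₀| / (2 * K)
  have hr : 0 ≤ r := by positivity
  have half_le_sq : ∀ x ∈ Icc (x₀ - r) (x₀ + r), (|g x₀| / 2) ^ 2 ≤ g x ^ 2 := by
    intro x hx
    have hdist : |x - x₀| ≤ r := abs_sub_le_iff.2 ⟨by linarith [hx.2], by linarith [hx.1]⟩
    have hlip : |g x - g x₀| ≤ K * |x - x₀| := by
      simpa only [Real.dist_eq] using hg.dist_le_mul x x₀
    have hKr : K * r = |g x₀| / 2 := by simp only [r]; field_simp
    have : |g x₀| / 2 ≤ |g x| := by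
      nlinarith [abs_sub_abs_le_abs_sub (g x₀) (g x), abs_sub_comm (g x) (g x₀),
        mul_le_mul_of_nonneg_left hdist hK'.le]
    simpa only [sq_abs] using pow_le_pow_left₀ (by positivity) this 2
  calc |g x₀| ^ 3 = 4 * (K : ℝ) * ((2 * r) * (|g x₀| / 2) ^ 2) := by
        simp only [r]; field_simp; ring
    _ = 4 * (K : ℝ) * ∫ x in Icc (x₀ - r) (x₀ + r), (|g x₀| / 2) ^ 2 := by
      rw [setIntegral_const, Real.volume_real_Icc_of_le (by linarith), smul_eq_mul]
      ring
    _ ≤ 4 * (K : ℝ) * ∫ x in Icc (x₀ - r) (x₀ + r), g x ^ 2 := by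
      refine mul_le_mul_of_nonneg_left ?_ (by positivity)
      exact setIntegral_mono_on (integrableOn_const (by simp [Real.volume_Icc]))
        hint.integrableOn measurableSet_Icc half_le_sq
    _ ≤ 4 * (K : ℝ) * ∫ x, g x ^ 2 := by
      refine mul_le_mul_of_nonneg_left ?_ (by positivity)
      exact setIntegral_le_integral hint (.of_forall fun x ↦ sq_nonneg (g x))

theorem LipschitzWith.abs_lt_of_integral_sq_lt {K : ℝ≥0} (hK : 0 < K) {g : ℝ → ℝ}
    (hg : LipschitzWith K g) (hint : Integrable fun x ↦ g x ^ 2) {ε : ℝ} (hε : 0 < ε)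
    (hsmall : ∫ x, g x ^ 2 < ε ^ 3 / (4 * K)) (x : ℝ) : |g x| < ε := by
  refine lt_of_pow_lt_pow_left₀ 3 hε.le ?_
  calc |g x| ^ 3 ≤ 4 * (K : ℝ) * ∫ x, g x ^ 2 := hg.abs_pow_three_le_integral_sq hK hint x
    _ < 4 * (K : ℝ) * (ε ^ 3 / (4 * K)) := by gcongr
    _ = ε ^ 3 := by field_simp

theorem stmt_16_general (L0 : ℝ) (hL0 : 1 ≤ L0)
    (α β : ℝ → ℝ)
    (hstar : ℝ → ℝ → ℝ)
    (hLip : ∀ t ∈ Set.Ici (0:ℝ), ∀ x1 x2 : ℝ,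
      |hstar t x1 - hstar t x2| ≤ L0 * |x1 - x2|)
    (hsupp : ∀ t ∈ Set.Ici (0:ℝ), ∀ x : ℝ, x ∉ Set.Ioo (α t) (β t) → hstar t x = 0)
    (hL2cont : ∀ t0 ∈ Set.Ici (0:ℝ), ∀ ε : ℝ, 0 < ε → ∃ δ : ℝ, 0 < δ ∧
      ∀ t ∈ Set.Ici (0:ℝ), |t - t0| < δ →
        (∫ x : ℝ, (hstar t x - hstar t0 x) ^ 2) < ε) :
    ∀ t0 ∈ Set.Ici (0:ℝ), ∀ ε : ℝ, 0 < ε → ∃ δ : ℝ, 0 < δ ∧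
      ∀ t ∈ Set.Ici (0:ℝ), |t - t0| < δ →
        ∀ x : ℝ, |hstar t x - hstar t0 x| < ε := by
  have lipschitz (t) (ht : t ∈ Ici (0 : ℝ)) : LipschitzWith L0.toNNReal (hstar t) :=
    .of_dist_le' fun x y ↦ by simpa only [Real.dist_eq] using hLip t ht x y
  have compactSupport (t) (ht : t ∈ Ici (0 : ℝ)) : HasCompactSupport (hstar t) :=
    .intro isCompact_Icc fun x hx ↦ hsupp t ht x fun h ↦ hx (Ioo_subset_Icc_self h)
  intro t0 ht0 ε hε
  set K := L0.toNNReal + L0.toNNReal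
  have hK : 0 < K := add_pos_of_pos_of_nonneg (Real.toNNReal_pos.2 (by linarith)) zero_le
  obtain ⟨δ, hδ, hclose⟩ := hL2cont t0 ht0 (ε ^ 3 / (4 * (K : ℝ))) (by positivity)
  refine ⟨δ, hδ, fun t ht htδ x ↦ ?_⟩
  have hdiff : LipschitzWith K fun x ↦ hstar t x - hstar t0 x :=
    (lipschitz t ht).sub (lipschitz t0 ht0)
  have hcs : HasCompactSupport fun x ↦ hstar t x - hstar t0 x :=
    (compactSupport t ht).sub (compactSupport t0 ht0)
  have hint : Integrable fun x ↦ (hstar t x - hstar t0 x) ^ 2 :=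
    (hdiff.continuous.pow 2).integrable_of_hasCompactSupport
      (hcs.comp_left (zero_pow two_ne_zero))
  exact hdiff.abs_lt_of_integral_sq_lt hK hint hε (hclose t ht htδ) x

/-- If `h*(t,·)` is uniformly Lipschitz with constant `L0`, vanishes outside
`(α(t), β(t))` with `α, β` continuous, and `t ↦ h*(t,·)` is continuous into `L²(ℝ)`,
then `t ↦ h*(t,·)` is continuous from `[0,∞)` into `C_b(ℝ)` (with the supremum norm). -/
theorem stmt_16 (L0 : ℝ) (hL0 : 1 ≤ L0)
    (α β : ℝ → ℝ)
    (hα : ContinuousOn α (Set.Ici 0)) (hβ : ContinuousOn β (Set.Ici 0))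
    (hstar : ℝ → ℝ → ℝ)
    (hLip : ∀ t ∈ Set.Ici (0:ℝ), ∀ x1 x2 : ℝ,
      |hstar t x1 - hstar t x2| ≤ L0 * |x1 - x2|)
    (hsupp : ∀ t ∈ Set.Ici (0:ℝ), ∀ x : ℝ, x ∉ Set.Ioo (α t) (β t) → hstar t x = 0)
    (hL2cont : ∀ t0 ∈ Set.Ici (0:ℝ), ∀ ε : ℝ, 0 < ε → ∃ δ : ℝ, 0 < δ ∧
      ∀ t ∈ Set.Ici (0:ℝ), |t - t0| < δ →
        (∫ x : ℝ, (hstar t x - hstar t0 x) ^ 2) < ε) :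
    ∀ t0 ∈ Set.Ici (0:ℝ), ∀ ε : ℝ, 0 < ε → ∃ δ : ℝ, 0 < δ ∧
      ∀ t ∈ Set.Ici (0:ℝ), |t - t0| < δ →
        ∀ x : ℝ, |hstar t x - hstar t0 x| < ε :=
  stmt_16_general L0 hL0 α β hstar hLip hsupp hL2cont
end

section
/- Under the stated hypotheses, the functions t ↦ g(t,α(t)) and t ↦ g(t,β(t)) are continuous on [0,∞). -/
/-!
Each `g t` is uniformly continuous on `[α t, β t]` with the modulus `r ↦ √M √r`, which does not
depend on `t`. Hence near `t₀` the endpoint value `g t (α t)` is uniformly approximated by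
`g t x` for a fixed interior point `x` close to `α t₀`, and the continuity in `t` of these
approximants passes to the uniform limit.
-/

open Set Filter Topology

theorem continuousWithinAt_of_seq_tendsto {X Y : Type*} [TopologicalSpace X]
    [FirstCountableTopology X] [TopologicalSpace Y] {f : X → Y} {s : Set X} {x : X} (hx : x ∈ s)
    (h : ∀ u : ℕ → X, (∀ n, u n ∈ s) → Tendsto u atTop (𝓝 x) → Tendsto (f ∘ u) atTop (𝓝 (f x))) :
    ContinuousWithinAt f s x := by
  rw [continuousWithinAt_iff_continuousAt_domRestrict f hx, ContinuousAt,
    tendsto_nhds_iff_seq_tendsto]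
  exact fun u hu => h _ (fun n => (u n).2) ((continuous_subtype_val.tendsto _).comp hu)

theorem continuousWithinAt_apply_of_modulus {T : Type*} [TopologicalSpace T] {s : Set T} {t₀ : T}
    {a b e : T → ℝ} {g : T → ℝ → ℝ} {ω : ℝ → ℝ} (ht₀ : t₀ ∈ s)
    (ha : ContinuousWithinAt a s t₀) (hb : ContinuousWithinAt b s t₀) (hab : a t₀ < b t₀)
    (he : ContinuousWithinAt e s t₀) (he_mem : ∀ t ∈ s, e t ∈ Icc (a t) (b t))
    (hω : Tendsto ω (𝓝 0) (𝓝 0))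
    (hmod : ∀ t ∈ s, ∀ x ∈ Icc (a t) (b t), ∀ y ∈ Icc (a t) (b t),
      dist (g t x) (g t y) ≤ ω (dist x y))
    (hg : ∀ x ∈ Ioo (a t₀) (b t₀), ContinuousWithinAt (fun t => g t x) s t₀) :
    ContinuousWithinAt (fun t => g t (e t)) s t₀ := by
  refine continuousWithinAt_of_locally_uniform_approx_of_continuousWithinAt ht₀ fun u hu => ?_
  obtain ⟨ε, hε, hεu⟩ := Metric.mem_uniformity_dist.mp hu
  obtain ⟨δ, hδ, hωδ⟩ := Metric.tendsto_nhds_nhds.mp hω ε hε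
  obtain ⟨x, hx, hex⟩ : ∃ x ∈ Ioo (a t₀) (b t₀), dist (e t₀) x < δ / 2 := by
    have : e t₀ ∈ closure (Ioo (a t₀) (b t₀)) := closure_Ioo hab.ne ▸ he_mem t₀ ht₀
    exact Metric.mem_closure_iff.mp this _ (half_pos hδ)
  have hnear : ∀ᶠ t in 𝓝[s] t₀, t ∈ s ∧ a t < x ∧ x < b t ∧ dist (e t) (e t₀) < δ / 2 :=
    eventually_mem_nhdsWithin.and <| (ha.eventually (eventually_lt_nhds hx.1)).and <|
      (hb.eventually (eventually_gt_nhds hx.2)).and (Metric.tendsto_nhds.mp he _ (half_pos hδ))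
  refine ⟨_, hnear, _, hg x hx, fun t ⟨ht, hax, hxb, het⟩ => hεu ?_⟩
  have hdist : dist (e t) x < δ := (dist_triangle _ _ _).trans_lt (by linarith)
  calc dist (g t (e t)) (g t x) ≤ ω (dist (e t) x) :=
        hmod t ht _ (he_mem t ht) x ⟨hax.le, hxb.le⟩
    _ ≤ dist (ω (dist (e t) x)) 0 := by rw [Real.dist_0_eq_abs]; exact le_abs_self _
    _ < ε := hωδ (by rwa [Real.dist_0_eq_abs, abs_dist])

theorem dist_le_mul_sqrt_dist_of_forall_le {f : ℝ → ℝ} {a b C : ℝ}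
    (h : ∀ x₁ x₂, a ≤ x₁ → x₁ ≤ x₂ → x₂ ≤ b → |f x₂ - f x₁| ≤ C * √(x₂ - x₁)) :
    ∀ x ∈ Icc a b, ∀ y ∈ Icc a b, dist (f x) (f y) ≤ C * √(dist x y) := by
  intro x hx y hy
  rcases le_total x y with hxy | hyx
  · rw [dist_comm, dist_comm x, Real.dist_eq, Real.dist_eq, abs_of_nonneg (sub_nonneg.2 hxy)]
    exact h x y hx.1 hxy hy.2
  · rw [Real.dist_eq, Real.dist_eq, abs_of_nonneg (sub_nonneg.2 hyx)]
    exact h y x hy.1 hyx hx.2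

theorem stmt_17_general (M : ℝ)
    (α β : ℝ → ℝ)
    (hα : ContinuousOn α (Set.Ici 0)) (hβ : ContinuousOn β (Set.Ici 0))
    (hαβ : ∀ t ∈ Set.Ici (0:ℝ), α t < β t)
    (g : ℝ → ℝ → ℝ)
    (hHolder : ∀ t ∈ Set.Ici (0:ℝ), ∀ x1 x2 : ℝ, α t ≤ x1 → x1 ≤ x2 → x2 ≤ β t →
      |g t x2 - g t x1| ≤ Real.sqrt M * Real.sqrt (x2 - x1))
    (hconv : ∀ t0 ∈ Set.Ici (0:ℝ), ∀ x : ℝ, α t0 < x → x < β t0 →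
      ∀ tn : ℕ → ℝ, (∀ n : ℕ, 0 ≤ tn n) → Tendsto tn atTop (nhds t0) →
        Tendsto (fun n => g (tn n) x) atTop (nhds (g t0 x))) :
    ContinuousOn (fun t => g t (α t)) (Set.Ici 0) ∧
    ContinuousOn (fun t => g t (β t)) (Set.Ici 0) := by
  have hω : Tendsto (fun r => √M * √r) (𝓝 0) (𝓝 0) := by
    simpa using (Real.continuous_sqrt.tendsto 0).const_mul √M
  have hg : ∀ t₀ ∈ Ici (0 : ℝ), ∀ x ∈ Ioo (α t₀) (β t₀),
      ContinuousWithinAt (fun t => g t x) (Ici 0) t₀ :=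
    fun t₀ ht₀ x hx => continuousWithinAt_of_seq_tendsto ht₀ (hconv t₀ ht₀ x hx.1 hx.2)
  have hendpoint : ∀ e : ℝ → ℝ, ContinuousOn e (Ici 0) → (∀ t ∈ Ici 0, e t ∈ Icc (α t) (β t)) →
      ContinuousOn (fun t => g t (e t)) (Ici 0) :=
    fun e he he_mem t₀ ht₀ => continuousWithinAt_apply_of_modulus ht₀ (hα t₀ ht₀) (hβ t₀ ht₀)
      (hαβ t₀ ht₀) (he t₀ ht₀) he_mem hω
      (fun t ht => dist_le_mul_sqrt_dist_of_forall_le (hHolder t ht)) (hg t₀ ht₀)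
  exact ⟨hendpoint α hα fun t ht => ⟨le_rfl, (hαβ t ht).le⟩,
    hendpoint β hβ fun t ht => ⟨(hαβ t ht).le, le_rfl⟩⟩

/-- If `g(t,·)` is uniformly `1/2`-Hölder (with constant `√M`) on `[α(t), β(t)]`,
`α, β` are continuous with `α < β`, and `g(t_n, x) → g(t0, x)` whenever `t_n → t0` in
`[0,∞)` and `x ∈ (α(t0), β(t0))`, then `t ↦ g(t, α(t))` and `t ↦ g(t, β(t))` are
continuous on `[0,∞)`. -/
theorem stmt_17 (M : ℝ) (hM : 0 < M)
    (α β : ℝ → ℝ)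
    (hα : ContinuousOn α (Set.Ici 0)) (hβ : ContinuousOn β (Set.Ici 0))
    (hαβ : ∀ t ∈ Set.Ici (0:ℝ), α t < β t)
    (g : ℝ → ℝ → ℝ)
    (hHolder : ∀ t ∈ Set.Ici (0:ℝ), ∀ x1 x2 : ℝ, α t ≤ x1 → x1 ≤ x2 → x2 ≤ β t →
      |g t x2 - g t x1| ≤ Real.sqrt M * Real.sqrt (x2 - x1))
    (hconv : ∀ t0 ∈ Set.Ici (0:ℝ), ∀ x : ℝ, α t0 < x → x < β t0 →
      ∀ tn : ℕ → ℝ, (∀ n : ℕ, 0 ≤ tn n) → Tendsto tn atTop (nhds t0) →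
        Tendsto (fun n => g (tn n) x) atTop (nhds (g t0 x))) :
    ContinuousOn (fun t => g t (α t)) (Set.Ici 0) ∧
    ContinuousOn (fun t => g t (β t)) (Set.Ici 0) :=
  stmt_17_general M α β hα hβ hαβ g hHolder hconv
end

section
/- Assume in addition that h(0,x) > 0 for every x ∈ (α(0),β(0)), h'(0,α(0)) > 0, and h'(0,β(0)) < 0. Then there exists T0 > 0 such that for every t ∈ [0,T0]: h(t,x) > 0 for all x ∈ (α(t),β(t)), h'(t,α(t)) > 0, and h'(t,β(t)) < 0. -/
open Set Filter Topology

/-- Short-time persistence of positivity of the profile and of the contact angles: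
if `h(0,·) > 0` inside `(α(0), β(0))`, `h'(0, α(0)) > 0`, and `h'(0, β(0)) < 0`, then
there is `T0 > 0` such that for every `t ∈ [0,T0]` one has `h(t,·) > 0` on
`(α(t), β(t))`, `h'(t, α(t)) > 0`, and `h'(t, β(t)) < 0`. -/
theorem stmt_18 (M L0 : ℝ) (hM : 0 < M) (hL0 : 1 ≤ L0)
    (α β : ℝ → ℝ)
    (hα : ContinuousOn α (Set.Ici 0)) (hβ : ContinuousOn β (Set.Ici 0))
    (hαβ : ∀ t ∈ Set.Ici (0:ℝ), α t < β t)
    (h h' : ℝ → ℝ → ℝ)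
    (hdiff : ∀ t ∈ Set.Ici (0:ℝ), ∀ x ∈ Set.Icc (α t) (β t),
      HasDerivWithinAt (h t) (h' t x) (Set.Icc (α t) (β t)) x)
    (hnonneg : ∀ t ∈ Set.Ici (0:ℝ), ∀ x ∈ Set.Icc (α t) (β t), 0 ≤ h t x)
    (hzeroα : ∀ t ∈ Set.Ici (0:ℝ), h t (α t) = 0)
    (hzeroβ : ∀ t ∈ Set.Ici (0:ℝ), h t (β t) = 0)
    -- (i) uniform 1/2-Hölder continuity of h' in x
    (hHolder : ∀ t ∈ Set.Ici (0:ℝ), ∀ x1 x2 : ℝ, α t ≤ x1 → x1 ≤ x2 → x2 ≤ β t →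
      |h' t x2 - h' t x1| ≤ Real.sqrt M * Real.sqrt (x2 - x1))
    -- (ii) continuity of the boundary slopes
    (hbdryα : ContinuousOn (fun t => h' t (α t)) (Set.Ici 0))
    (hbdryβ : ContinuousOn (fun t => h' t (β t)) (Set.Ici 0))
    -- (iii) continuity of t ↦ h*(t,·) into C_b(ℝ), where h* extends h by zero
    (hCb : ∀ t0 ∈ Set.Ici (0:ℝ), ∀ ε : ℝ, 0 < ε → ∃ δ : ℝ, 0 < δ ∧
      ∀ t ∈ Set.Ici (0:ℝ), |t - t0| < δ →
        ∀ x : ℝ, |(if x ∈ Set.Icc (α t) (β t) then h t x else 0) -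
            (if x ∈ Set.Icc (α t0) (β t0) then h t0 x else 0)| < ε)
    -- initial conditions
    (hinit : ∀ x ∈ Set.Ioo (α 0) (β 0), 0 < h 0 x)
    (hinitα : 0 < h' 0 (α 0))
    (hinitβ : h' 0 (β 0) < 0) :
    ∃ T0 : ℝ, 0 < T0 ∧ ∀ t ∈ Set.Icc (0:ℝ) T0,
      (∀ x ∈ Set.Ioo (α t) (β t), 0 < h t x) ∧
      0 < h' t (α t) ∧ h' t (β t) < 0 := by
  -- setup
  have h0 : (0:ℝ) ∈ Set.Ici (0:ℝ) := Set.mem_Ici.2 le_rfl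
  set a := h' 0 (α 0) with ha
  set b := -(h' 0 (β 0)) with hb
  have hbpos : 0 < b := by simpa [hb] using hinitβ
  set s0 := min a b with hs0def
  have hs0 : 0 < s0 := lt_min hinitα hbpos
  have hsM : 0 < 4 * Real.sqrt M + 1 := by positivity
  set r := min ((s0 / (4 * Real.sqrt M + 1))^2) (β 0 - α 0) with hrdef
  have hr : 0 < r := lt_min (by positivity) (sub_pos.2 (hαβ 0 h0))
  have hrβα : r ≤ β 0 - α 0 := min_le_right _ _
  have hsqrtr : Real.sqrt M * Real.sqrt r < s0 / 4 := by
    have h1 : Real.sqrt r ≤ s0 / (4 * Real.sqrt M + 1) := by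
      have : Real.sqrt ((s0 / (4 * Real.sqrt M + 1))^2) = s0 / (4 * Real.sqrt M + 1) :=
        Real.sqrt_sq (by positivity)
      calc Real.sqrt r ≤ Real.sqrt ((s0 / (4 * Real.sqrt M + 1))^2) :=
            Real.sqrt_le_sqrt (min_le_left _ _)
        _ = _ := this
    have h2 : Real.sqrt M * Real.sqrt r ≤ Real.sqrt M * (s0 / (4 * Real.sqrt M + 1)) :=
      mul_le_mul_of_nonneg_left h1 (Real.sqrt_nonneg M)
    have h3 : Real.sqrt M * (s0 / (4 * Real.sqrt M + 1)) < s0 / 4 := by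
      rw [mul_div_assoc' , div_lt_div_iff₀ hsM (by norm_num : (0:ℝ) < 4)]
      nlinarith [Real.sqrt_nonneg M]
    linarith
  -- continuity deltas for α and β
  obtain ⟨δ1, hδ1pos, hδ1⟩ := Metric.continuousWithinAt_iff.1 (hα 0 h0) (r/4) (by positivity)
  obtain ⟨δ2, hδ2pos, hδ2⟩ := Metric.continuousWithinAt_iff.1 (hβ 0 h0) (r/4) (by positivity)
  obtain ⟨δ3, hδ3pos, hδ3⟩ := Metric.continuousWithinAt_iff.1 (hbdryα 0 h0) (s0/2) (by positivity)
  obtain ⟨δ4, hδ4pos, hδ4⟩ := Metric.continuousWithinAt_iff.1 (hbdryβ 0 h0) (s0/2) (by positivity)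
  -- the middle compact set and its minimum
  set K0 := Set.Icc (α 0 + r/2) (β 0 - r/2) with hK0
  have hK0ne : K0.Nonempty := Set.nonempty_Icc.2 (by linarith)
  have hK0sub : K0 ⊆ Set.Icc (α 0) (β 0) := Set.Icc_subset_Icc (by linarith) (by linarith)
  have hcont0 : ContinuousOn (h 0) (Set.Icc (α 0) (β 0)) :=
    fun x hx => (hdiff 0 h0 x hx).continuousWithinAt
  obtain ⟨c, hcK, hcmin⟩ := (isCompact_Icc).exists_isMinOn hK0ne (hcont0.mono hK0sub)
  set m := h 0 c with hm
  have hmpos : 0 < m := by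
    apply hinit
    exact ⟨by have := hcK.1; linarith, by have := hcK.2; linarith⟩
  obtain ⟨δ5, hδ5pos, hδ5⟩ := hCb 0 h0 m hmpos
  -- the final time
  set δ := min δ1 (min δ2 (min δ3 (min δ4 δ5))) with hδdef
  have hδpos : 0 < δ := by
    simp only [hδdef, lt_min_iff]
    exact ⟨hδ1pos, hδ2pos, hδ3pos, hδ4pos, hδ5pos⟩
  refine ⟨δ/2, by positivity, ?_⟩
  intro t ht
  have htI : t ∈ Set.Ici (0:ℝ) := ht.1
  have htd : dist t 0 < δ := by
    rw [Real.dist_eq, sub_zero, abs_of_nonneg ht.1]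
    have := ht.2; linarith
  have htd1 : dist t 0 < δ1 := lt_of_lt_of_le htd (min_le_left _ _)
  have htd2 : dist t 0 < δ2 := lt_of_lt_of_le htd ((min_le_right _ _).trans (min_le_left _ _))
  have htd3 : dist t 0 < δ3 := lt_of_lt_of_le htd
    ((min_le_right _ _).trans ((min_le_right _ _).trans (min_le_left _ _)))
  have htd4 : dist t 0 < δ4 := lt_of_lt_of_le htd
    ((min_le_right _ _).trans ((min_le_right _ _).trans ((min_le_right _ _).trans (min_le_left _ _))))
  have htd5 : dist t 0 < δ5 := lt_of_lt_of_le htd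
    ((min_le_right _ _).trans ((min_le_right _ _).trans ((min_le_right _ _).trans (min_le_right _ _))))
  -- boundary estimates
  have hαt : |α t - α 0| < r/4 := by
    have := hδ1 htI htd1; rwa [Real.dist_eq] at this
  have hβt : |β t - β 0| < r/4 := by
    have := hδ2 htI htd2; rwa [Real.dist_eq] at this
  have hslopeα : s0/2 < h' t (α t) := by
    have := hδ3 htI htd3
    rw [Real.dist_eq] at this
    have h1 : h' t (α t) - a > -(s0/2) := neg_lt_of_abs_lt this
    have h2 : s0 ≤ a := min_le_left _ _
    linarith
  have hslopeβ : h' t (β t) < -(s0/2) := by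
    have := hδ4 htI htd4
    rw [Real.dist_eq] at this
    have h1 : h' t (β t) - h' 0 (β 0) < s0/2 := lt_of_abs_lt this
    have h2 : s0 ≤ b := min_le_right _ _
    have : h' 0 (β 0) = -b := by rw [hb]; ring
    linarith
  have hαβt := hαβ t htI
  refine ⟨?_, by linarith, by linarith⟩
  -- interior positivity
  intro x hx
  have hcontt : ContinuousOn (h t) (Set.Icc (α t) (β t)) :=
    fun y hy => (hdiff t htI y hy).continuousWithinAt
  -- derivative identification at interior points
  have hderivAt : ∀ y ∈ Set.Ioo (α t) (β t), deriv (h t) y = h' t y := by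
    intro y hy
    have hmem : Set.Icc (α t) (β t) ∈ 𝓝 y := Icc_mem_nhds hy.1 hy.2
    exact ((hdiff t htI y (Set.Ioo_subset_Icc_self hy)).hasDerivAt hmem).deriv
  by_cases hc1 : x < α t + r
  · -- near the left endpoint: strictly increasing
    have hmono : StrictMonoOn (h t) (Set.Icc (α t) x) := by
      apply strictMonoOn_of_deriv_pos (convex_Icc _ _)
        (hcontt.mono (Set.Icc_subset_Icc le_rfl hx.2.le))
      intro y hy
      rw [interior_Icc] at hy
      have hyI : y ∈ Set.Ioo (α t) (β t) := ⟨hy.1, hy.2.trans hx.2⟩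
      rw [hderivAt y hyI]
      have hH := hHolder t htI (α t) y le_rfl hyI.1.le hyI.2.le
      have h1 : h' t (α t) - h' t y ≤ Real.sqrt M * Real.sqrt (y - α t) := by
        have := abs_sub_le_iff.1 hH
        linarith [this.2]
      have h2 : Real.sqrt (y - α t) ≤ Real.sqrt r := by
        apply Real.sqrt_le_sqrt
        have : y < α t + r := lt_trans hy.2 hc1
        linarith
      have h3 : Real.sqrt M * Real.sqrt (y - α t) ≤ Real.sqrt M * Real.sqrt r :=
        mul_le_mul_of_nonneg_left h2 (Real.sqrt_nonneg M)
      linarith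
    have := hmono (Set.left_mem_Icc.2 hx.1.le) (Set.right_mem_Icc.2 hx.1.le) hx.1
    rwa [hzeroα t htI] at this
  · by_cases hc2 : β t - r < x
    · -- near the right endpoint: strictly decreasing
      have hanti : StrictAntiOn (h t) (Set.Icc x (β t)) := by
        apply strictAntiOn_of_deriv_neg (convex_Icc _ _)
          (hcontt.mono (Set.Icc_subset_Icc hx.1.le le_rfl))
        intro y hy
        rw [interior_Icc] at hy
        have hyI : y ∈ Set.Ioo (α t) (β t) := ⟨hx.1.trans hy.1, hy.2⟩
        rw [hderivAt y hyI]
        have hH := hHolder t htI y (β t) hyI.1.le hyI.2.le le_rfl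
        have h1 : h' t (β t) - h' t y ≥ -(Real.sqrt M * Real.sqrt (β t - y)) := by
          have := abs_sub_le_iff.1 hH
          linarith [this.2]
        have h2 : Real.sqrt (β t - y) ≤ Real.sqrt r := by
          apply Real.sqrt_le_sqrt
          have : β t - r < y := hc2.trans_le hy.1.le
          linarith
        have h3 : Real.sqrt M * Real.sqrt (β t - y) ≤ Real.sqrt M * Real.sqrt r :=
          mul_le_mul_of_nonneg_left h2 (Real.sqrt_nonneg M)
        linarith
      have := hanti (Set.left_mem_Icc.2 hx.2.le) (Set.right_mem_Icc.2 hx.2.le) hx.2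
      rwa [hzeroβ t htI] at this
    · -- middle region: use the C_b continuity
      push_neg at hc1 hc2
      have hαtl : α 0 - r/4 < α t := by
        have := neg_lt_of_abs_lt hαt; linarith
      have hβtu : β t < β 0 + r/4 := by
        have := lt_of_abs_lt hβt; linarith
      have hxK : x ∈ K0 := by
        constructor
        · have : α t + r ≤ x := hc1
          linarith
        · have : x ≤ β t - r := hc2
          linarith
      have hx0 : x ∈ Set.Icc (α 0) (β 0) := hK0sub hxK
      have hxt : x ∈ Set.Icc (α t) (β t) := Set.Ioo_subset_Icc_self hx
      have := hδ5 t htI (by rwa [Real.dist_eq] at htd5) x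
      rw [if_pos hxt, if_pos hx0] at this
      have hge : m ≤ h 0 x := hcmin hxK
      have : h t x - h 0 x > -m := neg_lt_of_abs_lt this
      linarith
end

section
/- Assume in addition that sup_{x ∈ [α(0),β(0)]} |h'(0,x)| < L0, and that for every compact interval I ⊂ [0,∞) and all a < b with α(t) ≤ a < b ≤ β(t) for every t ∈ I, the map t ↦ h'(t,·) restricted to [a,b] is continuous from I into C⁰([a,b]) with the supremum norm. Then there exists T1 > 0 such that sup_{x ∈ [α(t),β(t)]} |h'(t,x)| < L0 for every t ∈ [0,T1]; in particular, the Lipschitz constant of the extension of h(t,·) by zero is strictly less than L0 for every t ∈ [0,T1]. -/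
open Set Filter Topology

/-- Short-time persistence of the strict Lipschitz bound: if `|h'(0,·)| < L0` on
`[α(0), β(0)]` and `t ↦ h'(t,·)` is continuous on interior intervals, then there is
`T1 > 0` such that `|h'(t,x)| < L0` for every `t ∈ [0,T1]` and `x ∈ [α(t), β(t)]`
(so the Lipschitz constant of the extension of `h(t,·)` by zero is `< L0`). -/
theorem stmt_19 (M L0 : ℝ) (hM : 0 < M) (hL0 : 1 ≤ L0)
    (α β : ℝ → ℝ)
    (hα : ContinuousOn α (Set.Ici 0)) (hβ : ContinuousOn β (Set.Ici 0))
    (hαβ : ∀ t ∈ Set.Ici (0:ℝ), α t < β t)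
    (h h' : ℝ → ℝ → ℝ)
    (hdiff : ∀ t ∈ Set.Ici (0:ℝ), ∀ x ∈ Set.Icc (α t) (β t),
      HasDerivWithinAt (h t) (h' t x) (Set.Icc (α t) (β t)) x)
    (hnonneg : ∀ t ∈ Set.Ici (0:ℝ), ∀ x ∈ Set.Icc (α t) (β t), 0 ≤ h t x)
    (hzeroα : ∀ t ∈ Set.Ici (0:ℝ), h t (α t) = 0)
    (hzeroβ : ∀ t ∈ Set.Ici (0:ℝ), h t (β t) = 0)
    -- (i) uniform 1/2-Hölder continuity of h' in x
    (hHolder : ∀ t ∈ Set.Ici (0:ℝ), ∀ x1 x2 : ℝ, α t ≤ x1 → x1 ≤ x2 → x2 ≤ β t →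
      |h' t x2 - h' t x1| ≤ Real.sqrt M * Real.sqrt (x2 - x1))
    -- (ii) continuity of the boundary slopes
    (hbdryα : ContinuousOn (fun t => h' t (α t)) (Set.Ici 0))
    (hbdryβ : ContinuousOn (fun t => h' t (β t)) (Set.Ici 0))
    -- (iii) continuity of t ↦ h*(t,·) into C_b(ℝ), where h* extends h by zero
    (hCb : ∀ t0 ∈ Set.Ici (0:ℝ), ∀ ε : ℝ, 0 < ε → ∃ δ : ℝ, 0 < δ ∧
      ∀ t ∈ Set.Ici (0:ℝ), |t - t0| < δ →
        ∀ x : ℝ, |(if x ∈ Set.Icc (α t) (β t) then h t x else 0) -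
            (if x ∈ Set.Icc (α t0) (β t0) then h t0 x else 0)| < ε)
    -- additional assumption: |h'(0,·)| < L0 on [α(0), β(0)]
    (hsmall : ∀ x ∈ Set.Icc (α 0) (β 0), |h' 0 x| < L0)
    -- additional assumption: continuity of t ↦ h'(t,·) on interior intervals
    (hIcont : ∀ I : Set ℝ, IsCompact I → I ⊆ Set.Ici 0 →
      ∀ a b : ℝ, a < b → (∀ t ∈ I, α t ≤ a ∧ b ≤ β t) →
        ∀ t0 ∈ I, ∀ ε : ℝ, 0 < ε → ∃ δ : ℝ, 0 < δ ∧
          ∀ t ∈ I, |t - t0| < δ → ∀ x ∈ Set.Icc a b, |h' t x - h' t0 x| < ε) :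
    ∃ T1 : ℝ, 0 < T1 ∧ ∀ t ∈ Set.Icc (0:ℝ) T1,
      ∀ x ∈ Set.Icc (α t) (β t), |h' t x| < L0 := by

  have h0 : (0:ℝ) ∈ Set.Ici (0:ℝ) := Set.self_mem_Ici
  have hba : α 0 < β 0 := hαβ 0 h0
  -- continuity of h' 0 on [α 0, β 0]
  have hcont0 : ContinuousOn (fun x => h' 0 x) (Set.Icc (α 0) (β 0)) := by
    intro x0 hx0
    rw [Metric.continuousWithinAt_iff]
    intro ε hε
    refine ⟨ε ^ 2 / (M + 1), by positivity, ?_⟩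
    intro y hy hdy
    rw [Real.dist_eq] at hdy ⊢
    have key : |h' 0 y - h' 0 x0| ≤ Real.sqrt M * Real.sqrt |y - x0| := by
      rcases le_total y x0 with hle | hle
      · have hk := hHolder 0 h0 y x0 hy.1 hle hx0.2
        rw [abs_sub_comm]
        have : |y - x0| = x0 - y := by rw [abs_of_nonpos (by linarith)]; ring
        rwa [this]
      · have hk := hHolder 0 h0 x0 y hx0.1 hle hy.2
        have : |y - x0| = y - x0 := abs_of_nonneg (by linarith)
        rwa [this]
    have hMle : Real.sqrt M * Real.sqrt |y - x0| ≤ Real.sqrt (M * (ε ^ 2 / (M + 1))) := by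
      rw [Real.sqrt_mul hM.le]
      exact mul_le_mul_of_nonneg_left (Real.sqrt_le_sqrt hdy.le) (Real.sqrt_nonneg M)
    have hlt : Real.sqrt (M * (ε ^ 2 / (M + 1))) < ε := by
      have h1 : M * (ε ^ 2 / (M + 1)) < ε ^ 2 := by
        rw [← mul_div_assoc, div_lt_iff₀ (by linarith : (0:ℝ) < M + 1)]
        nlinarith [pow_pos hε 2]
      calc Real.sqrt (M * (ε ^ 2 / (M + 1))) < Real.sqrt (ε ^ 2) :=
            Real.sqrt_lt_sqrt (by positivity) h1
        _ = ε := by rw [Real.sqrt_sq hε.le]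
    linarith
  -- maximum of |h' 0| on the compact interval
  obtain ⟨xm, hxmmem, hxmmax⟩ := isCompact_Icc.exists_isMaxOn
    (Set.nonempty_Icc.mpr hba.le) hcont0.abs
  set ε := L0 - |h' 0 xm| with hεdef
  have hε : 0 < ε := by
    have := hsmall xm hxmmem
    simp only [hεdef]; linarith
  have hmax : ∀ y ∈ Set.Icc (α 0) (β 0), |h' 0 y| ≤ L0 - ε := by
    intro y hy
    have := isMaxOn_iff.mp hxmmax y hy
    simp only [hεdef]; linarith
  set s := Real.sqrt M with hsdef
  have hs : 0 ≤ s := Real.sqrt_nonneg M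
  set d : ℝ := min ((β 0 - α 0) / 4) ((ε / (2 * (s + 1))) ^ 2 / 3) with hddef
  have hd : 0 < d := lt_min (by linarith) (by positivity)
  have hd4 : d ≤ (β 0 - α 0) / 4 := min_le_left _ _
  have hsd : s * Real.sqrt (3 * d) < ε / 2 := by
    have h3d : 3 * d ≤ (ε / (2 * (s + 1))) ^ 2 := by
      have := min_le_right ((β 0 - α 0) / 4) ((ε / (2 * (s + 1))) ^ 2 / 3)
      linarith [this.trans_eq rfl]
    have hsq : Real.sqrt (3 * d) ≤ ε / (2 * (s + 1)) := by
      calc Real.sqrt (3 * d) ≤ Real.sqrt ((ε / (2 * (s + 1))) ^ 2) := Real.sqrt_le_sqrt h3d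
        _ = ε / (2 * (s + 1)) := Real.sqrt_sq (by positivity)
    have : s * Real.sqrt (3 * d) ≤ s * (ε / (2 * (s + 1))) :=
      mul_le_mul_of_nonneg_left hsq hs
    have hlt : s * (ε / (2 * (s + 1))) < ε / 2 := by
      rw [← mul_div_assoc, div_lt_div_iff₀ (by positivity) (by norm_num : (0:ℝ) < 2)]
      nlinarith
    linarith
  -- extract continuity moduli at t = 0
  have hαc := Metric.continuousWithinAt_iff.mp (hα 0 h0)
  obtain ⟨δ1, hδ1, hα1⟩ := hαc d hd
  have hβc := Metric.continuousWithinAt_iff.mp (hβ 0 h0)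
  obtain ⟨δ2, hδ2, hβ1⟩ := hβc d hd
  have hbαc := Metric.continuousWithinAt_iff.mp (hbdryα 0 h0)
  obtain ⟨δ3, hδ3, hbα1⟩ := hbαc (ε / 2) (by positivity)
  have hbβc := Metric.continuousWithinAt_iff.mp (hbdryβ 0 h0)
  obtain ⟨δ4, hδ4, hbβ1⟩ := hbβc (ε / 2) (by positivity)
  set T : ℝ := min (min δ1 δ2) (min δ3 δ4) / 2 with hTdef
  have hT : 0 < T := by positivity
  have hTδ1 : T < δ1 := by
    have : min (min δ1 δ2) (min δ3 δ4) ≤ δ1 := (min_le_left _ _).trans (min_le_left _ _)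
    simp only [hTdef]; linarith
  have hTδ2 : T < δ2 := by
    have : min (min δ1 δ2) (min δ3 δ4) ≤ δ2 := (min_le_left _ _).trans (min_le_right _ _)
    simp only [hTdef]; linarith
  have hTδ3 : T < δ3 := by
    have : min (min δ1 δ2) (min δ3 δ4) ≤ δ3 := (min_le_right _ _).trans (min_le_left _ _)
    simp only [hTdef]; linarith
  have hTδ4 : T < δ4 := by
    have : min (min δ1 δ2) (min δ3 δ4) ≤ δ4 := (min_le_right _ _).trans (min_le_right _ _)
    simp only [hTdef]; linarith
  set a : ℝ := α 0 + d with hadef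
  set b : ℝ := β 0 - d with hbdef
  have hab : a < b := by simp only [hadef, hbdef]; linarith
  -- distance facts for t ∈ [0, T]
  have hdist : ∀ t : ℝ, 0 ≤ t → t ≤ T → ∀ δ : ℝ, T < δ → dist t 0 < δ := by
    intro t ht0 htT δ hδ
    rw [Real.dist_eq, sub_zero, abs_of_nonneg ht0]
    linarith
  have hαnear : ∀ t : ℝ, 0 ≤ t → t ≤ T → |α t - α 0| < d := by
    intro t ht0 htT
    have := hα1 (show t ∈ Set.Ici (0:ℝ) from ht0) (hdist t ht0 htT δ1 hTδ1)
    rwa [Real.dist_eq] at this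
  have hβnear : ∀ t : ℝ, 0 ≤ t → t ≤ T → |β t - β 0| < d := by
    intro t ht0 htT
    have := hβ1 (show t ∈ Set.Ici (0:ℝ) from ht0) (hdist t ht0 htT δ2 hTδ2)
    rwa [Real.dist_eq] at this
  have hbαnear : ∀ t : ℝ, 0 ≤ t → t ≤ T → |h' t (α t) - h' 0 (α 0)| < ε / 2 := by
    intro t ht0 htT
    have := hbα1 (show t ∈ Set.Ici (0:ℝ) from ht0) (hdist t ht0 htT δ3 hTδ3)
    rwa [Real.dist_eq] at this
  have hbβnear : ∀ t : ℝ, 0 ≤ t → t ≤ T → |h' t (β t) - h' 0 (β 0)| < ε / 2 := by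
    intro t ht0 htT
    have := hbβ1 (show t ∈ Set.Ici (0:ℝ) from ht0) (hdist t ht0 htT δ4 hTδ4)
    rwa [Real.dist_eq] at this
  -- interior continuity on I = [0, T]
  have hIsub : Set.Icc (0:ℝ) T ⊆ Set.Ici 0 := Set.Icc_subset_Ici_self
  have hbound : ∀ t ∈ Set.Icc (0:ℝ) T, α t ≤ a ∧ b ≤ β t := by
    intro t ht
    have h1 := abs_lt.mp (hαnear t ht.1 ht.2)
    have h2 := abs_lt.mp (hβnear t ht.1 ht.2)
    constructor
    · simp only [hadef]; linarith
    · simp only [hbdef]; linarith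
  obtain ⟨δI, hδI, hImid⟩ := hIcont (Set.Icc 0 T) isCompact_Icc hIsub a b hab hbound
    0 (Set.mem_Icc.mpr ⟨le_refl 0, hT.le⟩) (ε / 2) (by positivity)
  -- the final time
  refine ⟨min T (δI / 2), lt_min hT (by positivity), ?_⟩
  intro t ht x hx
  have ht0 : 0 ≤ t := ht.1
  have htT : t ≤ T := ht.2.trans (min_le_left _ _)
  have htI : t ∈ Set.Ici (0:ℝ) := ht0
  have htδI : |t - 0| < δI := by
    rw [sub_zero, abs_of_nonneg ht0]
    have : t ≤ δI / 2 := ht.2.trans (min_le_right _ _)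
    linarith
  have hmid := hImid t (Set.mem_Icc.mpr ⟨ht0, htT⟩) htδI
  have hα2 := abs_lt.mp (hαnear t ht0 htT)
  have hβ2 := abs_lt.mp (hβnear t ht0 htT)
  -- a triangle inequality helper
  have tri : ∀ A B C : ℝ, |A| ≤ |A - B| + |B - C| + |C| := by
    intro A B C
    calc |A| = |(A - B) + (B - C) + C| := by congr 1; ring
      _ ≤ |(A - B) + (B - C)| + |C| := abs_add_le _ _
      _ ≤ |A - B| + |B - C| + |C| := by linarith [abs_add_le (A - B) (B - C)]
  rcases le_total x a with hxa | hxa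
  · -- near the left boundary
    have hxd : x - α t ≤ 3 * d := by
      have : x ≤ a := hxa
      simp only [hadef] at this
      linarith
    have hH := hHolder t htI (α t) x (le_refl _) hx.1 hx.2
    have hsq : Real.sqrt (x - α t) ≤ Real.sqrt (3 * d) := Real.sqrt_le_sqrt hxd
    have h1 : |h' t x - h' t (α t)| < ε / 2 := by
      calc |h' t x - h' t (α t)| ≤ s * Real.sqrt (x - α t) := hH
        _ ≤ s * Real.sqrt (3 * d) := mul_le_mul_of_nonneg_left hsq hs
        _ < ε / 2 := hsd
    have h2 := hbαnear t ht0 htT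
    have h3 : |h' 0 (α 0)| ≤ L0 - ε := hmax (α 0) ⟨le_refl _, hba.le⟩
    have := tri (h' t x) (h' t (α t)) (h' 0 (α 0))
    linarith
  rcases le_total b x with hxb | hxb
  · -- near the right boundary
    have hxd : β t - x ≤ 3 * d := by
      have : b ≤ x := hxb
      simp only [hbdef] at this
      linarith
    have hH := hHolder t htI x (β t) hx.1 hx.2 (le_refl _)
    have hsq : Real.sqrt (β t - x) ≤ Real.sqrt (3 * d) := Real.sqrt_le_sqrt hxd
    have h1 : |h' t x - h' t (β t)| < ε / 2 := by
      rw [abs_sub_comm]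
      calc |h' t (β t) - h' t x| ≤ s * Real.sqrt (β t - x) := hH
        _ ≤ s * Real.sqrt (3 * d) := mul_le_mul_of_nonneg_left hsq hs
        _ < ε / 2 := hsd
    have h2 := hbβnear t ht0 htT
    have h3 : |h' 0 (β 0)| ≤ L0 - ε := hmax (β 0) ⟨hba.le, le_refl _⟩
    have := tri (h' t x) (h' t (β t)) (h' 0 (β 0))
    linarith
  · -- the interior region
    have hxab : x ∈ Set.Icc a b := ⟨hxa, hxb⟩
    have h1 := hmid x hxab
    have hx0 : x ∈ Set.Icc (α 0) (β 0) := by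
      constructor
      · have : a ≤ x := hxa
        simp only [hadef] at this; linarith
      · have : x ≤ b := hxb
        simp only [hbdef] at this; linarith
    have h2 : |h' 0 x| ≤ L0 - ε := hmax x hx0
    have h3 : |h' t x| ≤ |h' t x - h' 0 x| + |h' 0 x| := by
      calc |h' t x| = |(h' t x - h' 0 x) + h' 0 x| := by congr 1; ring
        _ ≤ |h' t x - h' 0 x| + |h' 0 x| := abs_add_le _ _
    linarith
end
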